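/- arXiv:2105.02677 — 4 statements merged into one kernel-verified Lean document; each statement's English description precedes it below -/
import Mathlib

section
/- Let G be a finite connected graph with n vertices and m edges, and let H be a Hermitian matrix supported on the arcs of G with entries H_{uv} = h_f·e^{2iγ_f} for f=(u,v), where h_{f⁻¹}=h_f ≥ 0 and γ_{f⁻¹}=-γ_f. Define Γ_u = Σ_{e: o(e)=u} h_e, x_u = 2/(H_{uu} - λ - i·Γ_u), w(e) = √(h_e)·e^{iγ_e}, and the 2m×2m bond scattering matrix U(λ) with entries U_{ef} = i·δ_{e⁻¹,f} - x_{t(e)}·w(e)·w(f) if t(e)=o(f), and 0 otherwise. Then det(I_{2m} - U(λ)) = (-1)^n·2^m·det(λ·I_n - H) / ∏_{u=1}^{n} (H_{uu} - λ - i·Γ_u). -/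
/-!
Write `U = i J - T diag(x) O`, where `J` is the permutation matrix of arc reversal and `T`, `O`
are the target and source incidence matrices weighted by `w`. Since `J² = 1`, the matrix
`K = 1 - i J` has inverse `(1 + i J) / 2`, and splitting the arcs into reversed pairs shows
`det K = 2 ^ m`. The matrix determinant lemma gives
`det (1 - U) = det K · det (1 + O K⁻¹ T diag(x))` and moves the problem to the vertices:
`O T` is the off-diagonal part of `H` and `O J T = diag(Γ)`, so with `x = 2 / d`, where
`d u = H u u - λ - i Γ u`, the vertex matrix is `(H - λ) diag(d)⁻¹`.
-/

open Matrix

theorem Function.Involutive.exists_sum_equiv_swap {α : Type*} {σ : α → α}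
    (hσ : Function.Involutive σ) (hfix : ∀ a, σ a ≠ a) :
    ∃ (S : Set α) (φ : S ⊕ S ≃ α), ∀ i, σ (φ i) = φ i.swap := by
  let _ : LinearOrder α := IsWellOrder.linearOrder WellOrderingRel
  have hσlt : ∀ {a}, a < σ a → ¬σ a < σ (σ a) := fun h => by rw [hσ]; exact h.asymm
  let φ : {a | a < σ a} ⊕ {a | a < σ a} → α := Sum.elim (↑) (σ ∘ (↑))
  have hinj : φ.Injective := by
    rintro (⟨a, ha⟩ | ⟨a, ha⟩) (⟨b, hb⟩ | ⟨b, hb⟩) hab <;>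
      simp only [φ, Sum.elim_inl, Sum.elim_inr, Function.comp_apply] at hab
    · subst hab; rfl
    · subst hab; exact absurd ha (hσlt hb)
    · subst hab; exact absurd hb (hσlt ha)
    · obtain rfl := hσ.injective hab; rfl
  have hsurj : φ.Surjective := by
    intro a
    rcases (hfix a).symm.lt_or_gt with h | h
    · exact ⟨.inl ⟨a, h⟩, rfl⟩
    · refine ⟨.inr ⟨σ a, ?_⟩, hσ a⟩
      change σ a < σ (σ a)
      rwa [hσ]
  refine ⟨_, Equiv.ofBijective φ ⟨hinj, hsurj⟩, ?_⟩
  rintro (s | s)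
  · rfl
  · exact hσ s

theorem Matrix.det_one_sub_smul_permMatrix_of_involutive {A R : Type*} [Fintype A]
    [DecidableEq A] [CommRing R] {σ : Equiv.Perm A} (hσ : Function.Involutive σ)
    (hfix : ∀ a, σ a ≠ a) {m : ℕ} (hm : Fintype.card A = 2 * m) (c : R) :
    (1 - c • σ.permMatrix R).det = (1 - c ^ 2) ^ m := by
  classical
  obtain ⟨S, φ, hφ⟩ := hσ.exists_sum_equiv_swap hfix
  have hS : Fintype.card S = m := by
    have := Fintype.card_congr φ
    rw [Fintype.card_sum, hm] at this
    omega
  have hblocks :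
      (1 - c • σ.permMatrix R).submatrix φ φ = fromBlocks 1 (-c • 1) (-c • 1) 1 := by
    ext (i | i) (j | j) <;>
      simp [PEquiv.toMatrix_apply, hφ, φ.injective.eq_iff, one_apply, neg_smul]
  have hschur : (1 : Matrix S S R) - (-c • 1) * (-c • 1) = (1 - c ^ 2) • 1 := by
    simp [sub_smul, sq, smul_smul]
  rw [← det_submatrix_equiv_self φ, hblocks, det_fromBlocks_one₁₁, hschur, det_smul, det_one,
    mul_one, hS]

theorem Matrix.inv_one_sub_smul_of_mul_self_eq_one {A K : Type*} [Fintype A] [DecidableEq A]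
    [Field K] {J : Matrix A A K} (hJ : J * J = 1) {c : K} (hc : 1 - c ^ 2 ≠ 0) :
    (1 - c • J)⁻¹ = (1 - c ^ 2)⁻¹ • (1 + c • J) := by
  refine inv_eq_right_inv ?_
  have hfactor : (1 - c • J) * (1 + c • J) = (1 - c ^ 2) • 1 := by
    simp only [Matrix.sub_mul, Matrix.mul_add, Matrix.one_mul, Matrix.mul_one, smul_mul_smul, hJ]
    simp [sub_smul, sq]
  rw [Matrix.mul_smul, hfactor, smul_smul, inv_mul_cancel₀ hc, one_smul]

section Incidence

variable {A V R : Type*} [DecidableEq V] [CommRing R]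

def targetIncidence (t : A → V) (w : A → R) : Matrix A V R :=
  of fun e v => if t e = v then w e else 0

def sourceIncidence (o : A → V) (w : A → R) : Matrix V A R :=
  of fun v f => if o f = v then w f else 0

theorem targetIncidence_mul_diagonal_mul_sourceIncidence_apply [Fintype V] (o t : A → V)
    (w : A → R) (x : V → R) (e f : A) :
    (targetIncidence t w * diagonal x * sourceIncidence o w) e f =
      if t e = o f then x (t e) * w e * w f else 0 := by
  simp only [targetIncidence, sourceIncidence, mul_apply, of_apply, diagonal_apply, mul_ite,
    ite_mul, zero_mul, mul_zero, Finset.sum_ite_eq', Finset.mem_univ, if_true, Finset.sum_ite_eq]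
  split_ifs with h
  · rw [h]; ring
  · rfl

theorem sourceIncidence_mul_targetIncidence_apply [Fintype A] (o t : A → V) (w : A → R)
    (u v : V) :
    (sourceIncidence o w * targetIncidence t w) u v =
      ∑ f ∈ Finset.univ.filter (fun f => o f = u ∧ t f = v), w f * w f := by
  simp only [mul_apply, targetIncidence, sourceIncidence, of_apply, ite_mul, mul_ite, zero_mul,
    mul_zero, Finset.sum_filter, ite_and]
  exact Finset.sum_congr rfl fun f _ => by by_cases hf : o f = u <;> simp [hf]

theorem sourceIncidence_mul_permMatrix_mul_targetIncidence [Fintype A] [DecidableEq A]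
    {o t : A → V} {w g : A → R} {σ : Equiv.Perm A} (hσ : ∀ f, t (σ f) = o f)
    (hg : ∀ f, w f * w (σ f) = g f) :
    sourceIncidence o w * σ.permMatrix R * targetIncidence t w =
      diagonal fun u => ∑ f ∈ Finset.univ.filter (fun f => o f = u), g f := by
  ext u v
  rw [Matrix.mul_assoc, PEquiv.toMatrix_toPEquiv_mul]
  simp only [mul_apply, targetIncidence, sourceIncidence, submatrix_apply, of_apply, hσ, id,
    ite_mul, mul_ite, zero_mul, mul_zero, diagonal_apply, Finset.sum_filter]
  by_cases huv : u = v
  · subst huv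
    simp +contextual [hg]
  · refine (Finset.sum_eq_zero fun f _ => ?_).trans (if_neg huv).symm
    grind

theorem eq_diagonal_add_sourceIncidence_mul_targetIncidence [Fintype A] {o t : A → V}
    {w : A → R} (hloop : ∀ e, o e ≠ t e) {H : Matrix V V R}
    (hH : ∀ u v, u ≠ v →
      H u v = ∑ f ∈ Finset.univ.filter (fun f => o f = u ∧ t f = v), w f * w f) :
    H = diagonal (fun u => H u u) + sourceIncidence o w * targetIncidence t w := by
  ext u v
  rw [Matrix.add_apply, sourceIncidence_mul_targetIncidence_apply]
  by_cases huv : u = v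
  · subst huv
    have hno_loops : Finset.univ.filter (fun f => o f = u ∧ t f = u) = ∅ :=
      Finset.filter_eq_empty_iff.mpr fun f _ hf => hloop f (hf.1.trans hf.2.symm)
    simp [hno_loops]
  · simp [huv, hH u v huv]

theorem eq_smul_permMatrix_sub_targetIncidence_mul [Fintype V] [DecidableEq A] {o t : A → V}
    {σ : Equiv.Perm A} (ho : ∀ e, o (σ e) = t e) (c : R) (x : V → R) (w : A → R)
    {U : Matrix A A R}
    (hU : ∀ e f, U e f =
      if t e = o f then (if f = σ e then c else 0) - x (t e) * w e * w f else 0) :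
    U = c • σ.permMatrix R - targetIncidence t w * diagonal x * sourceIncidence o w := by
  ext e f
  rw [hU, Matrix.sub_apply, targetIncidence_mul_diagonal_mul_sourceIncidence_apply]
  by_cases hf : f = σ e
  · subst hf
    simp [PEquiv.toMatrix_apply, ho]
  · have : σ e ≠ f := Ne.symm hf
    split_ifs <;> simp [PEquiv.toMatrix_apply, this]

end Incidence

theorem Matrix.one_add_mul_diagonal_inv {V K : Type*} [Fintype V] [DecidableEq V] [Field K]
    {d : V → K} (hd : ∀ u, d u ≠ 0) (M : Matrix V V K) :
    1 + M * diagonal d⁻¹ = (diagonal d + M) * diagonal d⁻¹ := by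
  rw [Matrix.add_mul, diagonal_mul_diagonal, ← diagonal_one]
  congr
  exact funext fun u => (mul_inv_cancel₀ (hd u)).symm

theorem Matrix.sub_smul_one_eq_diagonal_add {V R : Type*} [DecidableEq V]
    [CommRing R] {H M : Matrix V V R} (hH : H = diagonal (fun u => H u u) + M) (lam c : R)
    (Γ : V → R) :
    H - lam • 1 = diagonal (fun u => H u u - lam - c * Γ u) + (M + c • diagonal Γ) := by
  nth_rw 1 [hH]
  ext u v
  by_cases huv : u = v
  · subst huv
    simp only [Matrix.sub_apply, Matrix.add_apply, diagonal_apply_eq, Matrix.smul_apply,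
      one_apply_eq, smul_eq_mul, mul_one]
    ring
  · simp [huv]

section Weights

open Complex

theorem sqrt_mul_exp_mul_self {r : ℝ} (hr : 0 ≤ r) (θ : ℝ) :
    (√r * exp (I * θ)) * (√r * exp (I * θ)) = r * exp (2 * I * θ) := by
  rw [mul_mul_mul_comm, ← ofReal_mul, Real.mul_self_sqrt hr, ← Complex.exp_add]
  ring_nf

theorem sqrt_mul_exp_mul_sqrt_mul_exp_neg {r : ℝ} (hr : 0 ≤ r) (θ : ℝ) :
    (√r * exp (I * θ)) * (√r * exp (I * ↑(-θ))) = r := by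
  rw [mul_mul_mul_comm, ← ofReal_mul, Real.mul_self_sqrt hr, ← Complex.exp_add, ofReal_neg,
    mul_neg, add_neg_cancel, Complex.exp_zero, mul_one]

end Weights

theorem gnutzmann_smilansky_general
    (V A : Type*) [Fintype V] [Fintype A] [DecidableEq V] [DecidableEq A]
    (n m : ℕ) (hn : Fintype.card V = n) (hm : Fintype.card A = 2 * m)
    (o t : A → V) (einv : A → A)
    (hinvol : ∀ e, einv (einv e) = e)
    (ho : ∀ e, o (einv e) = t e)
    (hloop : ∀ e, o e ≠ t e)
    (h γ : A → ℝ) (hpos : ∀ e, 0 ≤ h e)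
    (hh : ∀ e, h (einv e) = h e) (hγ : ∀ e, γ (einv e) = -γ e)
    (w : A → ℂ) (hw : ∀ e, w e = Real.sqrt (h e) * Complex.exp (Complex.I * γ e))
    (H : Matrix V V ℂ)
    (hHoff : ∀ u v, u ≠ v → H u v =
      ∑ f ∈ Finset.univ.filter (fun f => o f = u ∧ t f = v),
        (h f : ℂ) * Complex.exp (2 * Complex.I * γ f))
    (Gam : V → ℝ)
    (hGam : ∀ u, Gam u = ∑ e ∈ Finset.univ.filter (fun e => o e = u), h e)
    (lam : ℂ)
    (hne : ∀ u, H u u - lam - Complex.I * Gam u ≠ 0)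
    (x : V → ℂ) (hx : ∀ u, x u = 2 / (H u u - lam - Complex.I * Gam u))
    (U : Matrix A A ℂ)
    (hU : ∀ e f, U e f = if t e = o f then
      (if f = einv e then Complex.I else 0) - x (t e) * w e * w f else 0) :
    (1 - U).det =
      (-1 : ℂ) ^ n * 2 ^ m * (lam • (1 : Matrix V V ℂ) - H).det /
        ∏ u : V, (H u u - lam - Complex.I * Gam u) := by
  obtain ⟨σ, rfl⟩ : ∃ σ : Equiv.Perm A, ⇑σ = einv :=
    ⟨_, Function.Involutive.coe_toPerm hinvol⟩
  set K := 1 - Complex.I • σ.permMatrix ℂ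
  set T := targetIncidence t w
  set O := sourceIncidence o w
  set d : V → ℂ := fun u => H u u - lam - Complex.I * Gam u
  have htσ : ∀ f, t (σ f) = o f := fun f => by rw [← ho, hinvol]
  have hdetK : K.det = 2 ^ m := by
    rw [det_one_sub_smul_permMatrix_of_involutive hinvol
      (fun e he => hloop e (he ▸ htσ e).symm) hm]
    norm_num
  have hKinv : K⁻¹ = (2 : ℂ)⁻¹ • (1 + Complex.I • σ.permMatrix ℂ) := by
    have hJJ : σ.permMatrix ℂ * σ.permMatrix ℂ = 1 := by
      rw [← permMatrix_mul, show σ * σ = 1 from Equiv.ext hinvol, permMatrix_one]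
    rw [inv_one_sub_smul_of_mul_self_eq_one hJJ (by norm_num)]
    norm_num
  have hΓ : O * σ.permMatrix ℂ * T = diagonal fun u => (Gam u : ℂ) := by
    rw [sourceIncidence_mul_permMatrix_mul_targetIncidence htσ fun f => by
      rw [hw, hw, hh, hγ, sqrt_mul_exp_mul_sqrt_mul_exp_neg (hpos f)]]
    simp [hGam]
  have hHd :
      H - lam • 1 = diagonal d + (O * T + Complex.I • (O * σ.permMatrix ℂ * T)) := by
    rw [hΓ]
    refine sub_smul_one_eq_diagonal_add ?_ lam Complex.I _
    refine eq_diagonal_add_sourceIncidence_mul_targetIncidence hloop fun u v huv => ?_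
    simp only [hHoff u v huv, hw, sqrt_mul_exp_mul_self (hpos _)]
  have hsmall : 1 + O * K⁻¹ * (T * diagonal x) = (H - lam • 1) * diagonal d⁻¹ := by
    have hx' : diagonal x = (2 : ℂ) • diagonal d⁻¹ := by
      ext u v
      simp [diagonal_apply, hx, d, div_eq_mul_inv]
    rw [hHd, ← one_add_mul_diagonal_inv (d := d) hne, hKinv, hx']
    simp only [Matrix.mul_add, Matrix.add_mul, Matrix.mul_smul, Matrix.smul_mul, Matrix.mul_one,
      Matrix.mul_assoc, smul_smul, smul_add, mul_inv_cancel_left₀ (two_ne_zero' ℂ)]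
    norm_num
  calc (1 - U).det = K.det * (1 + O * K⁻¹ * (T * diagonal x)).det := by
        rw [eq_smul_permMatrix_sub_targetIncidence_mul ho _ x w hU, sub_sub_eq_add_sub,
          add_sub_right_comm, det_add_mul _ _ (by rw [hdetK]; exact two_ne_zero.isUnit.pow m)]
    _ = 2 ^ m * ((H - lam • 1).det * ∏ u, (d u)⁻¹) := by
        rw [hdetK, hsmall, det_mul, det_diagonal]; rfl
    _ = _ := by
        rw [← neg_sub, det_neg, hn, Finset.prod_inv_distrib]
        ring

/-- Gnutzmann–Smilansky formula: for a finite connected graph with n vertices and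
m edges and a Hermitian matrix H supported on its arcs,
det(I_{2m} - U(λ)) = (-1)^n·2^m·det(λI_n - H) / ∏_u (H_{uu} - λ - iΓ_u). -/
theorem gnutzmann_smilansky
    (V A : Type*) [Fintype V] [Fintype A] [DecidableEq V] [DecidableEq A]
    (n m : ℕ) (hn : Fintype.card V = n) (hm : Fintype.card A = 2 * m)
    (o t : A → V) (einv : A → A)
    (hinvol : ∀ e, einv (einv e) = e)
    (ho : ∀ e, o (einv e) = t e)
    (hloop : ∀ e, o e ≠ t e)
    (hconn : ∀ u v : V, Relation.ReflTransGen (fun a b => ∃ e, o e = a ∧ t e = b) u v)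
    (h γ : A → ℝ) (hpos : ∀ e, 0 ≤ h e)
    (hh : ∀ e, h (einv e) = h e) (hγ : ∀ e, γ (einv e) = -γ e)
    (w : A → ℂ) (hw : ∀ e, w e = Real.sqrt (h e) * Complex.exp (Complex.I * γ e))
    (H : Matrix V V ℂ)
    (hHoff : ∀ u v, u ≠ v → H u v =
      ∑ f ∈ Finset.univ.filter (fun f => o f = u ∧ t f = v),
        (h f : ℂ) * Complex.exp (2 * Complex.I * γ f))
    (hHdiag : ∀ u, (H u u).im = 0)
    (Gam : V → ℝ)
    (hGam : ∀ u, Gam u = ∑ e ∈ Finset.univ.filter (fun e => o e = u), h e)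
    (lam : ℂ)
    (hne : ∀ u, H u u - lam - Complex.I * Gam u ≠ 0)
    (x : V → ℂ) (hx : ∀ u, x u = 2 / (H u u - lam - Complex.I * Gam u))
    (U : Matrix A A ℂ)
    (hU : ∀ e f, U e f = if t e = o f then
      (if f = einv e then Complex.I else 0) - x (t e) * w e * w f else 0) :
    (1 - U).det =
      (-1 : ℂ) ^ n * 2 ^ m * (lam • (1 : Matrix V V ℂ) - H).det /
        ∏ u : V, (H u u - lam - Complex.I * Gam u) :=
  gnutzmann_smilansky_general V A n m hn hm o t einv hinvol ho hloop h γ hpos hh hγ w hw H hHoff Gam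
    hGam lam hne x hx U hU
end

section
/- Let U be the bond scattering matrix of a finite graph G with m edges. Then for |u| sufficiently small, det(I_{2m} - u·U) = ∏_{[C]} (1 - w_C·u^{|C|}), where [C] ranges over all equivalence classes of prime cycles in G and w_C = σ_{e₁e₂}·σ_{e₂e₃}⋯σ_{e_k e₁} is the product of the scattering amplitudes along the cycle C = (e₁,…,e_k). -/
/-!
Both sides equal `exp (-∑_{n ≥ 1} u^n tr(U^n) / n)` for small `u`.

For the determinant this is the eigenvalue expansion: over the roots `λ` of the characteristic
polynomial, `det (1 - u U) = ∏ (1 - u λ)` and `tr (U^n) = ∑ λ^n`.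

For the cycles, `tr (U^n)` is the total weight of the closed walks of length `n`. A walk of nonzero
weight only uses composable arcs, so it is a cycle, and it is uniquely the `(r + 1)`-fold
repetition of a representative prime cycle `D`, rotated by some `k < |D|`. The `|D|` rotations
cancel the factor `1 / n` down to `1 / (r + 1)`, so regrouping the absolutely convergent walk
sum gives `∑_D ∑_r (w_D u^|D|)^(r+1) / (r+1) = -∑_D log (1 - w_D u^|D|)`.

Cycles are handled as periodic points of the shift on sequences of arcs: prime means minimal
period equal to the length, and rotations are iterates of the shift.
-/

open Matrix

/-- A cycle in a graph with arc set `A`, origin `o` and terminus `t`,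
represented by a periodic sequence of composable arcs. -/
structure GraphCycle {V A : Type*} (o t : A → V) where
  len : ℕ
  pos : 0 < len
  arcs : ℕ → A
  periodic : ∀ i, arcs (i + len) = arcs i
  closed : ∀ i, t (arcs i) = o (arcs (i + 1))

/-- A cycle is prime if it is not a power of a strictly smaller cycle, i.e.
its minimal positive period is its length. -/
def GraphCycle.IsPrime {V A : Type*} {o t : A → V} (C : GraphCycle o t) : Prop :=
  ∀ d, 0 < d → d < C.len → ∃ i, C.arcs (i + d) ≠ C.arcs i

/-- Two cycles are equivalent if one is a cyclic rotation of the other. -/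
def GraphCycle.Equiv {V A : Type*} {o t : A → V} (C D : GraphCycle o t) : Prop :=
  C.len = D.len ∧ ∃ k, ∀ j, D.arcs j = C.arcs (j + k)

/-- The weight w_C of a cycle: the product of the matrix entries along it. -/
def GraphCycle.weight {V A : Type*} {o t : A → V} (U : Matrix A A ℂ)
    (C : GraphCycle o t) : ℂ :=
  ∏ i ∈ Finset.range C.len, U (C.arcs i) (C.arcs (i + 1))

open Function Finset Filter Topology

lemma Multiset.hasSum_sum {ι β α : Type*} [AddCommMonoid α] [TopologicalSpace α]
    [ContinuousAdd α] {s : Multiset ι} {f : ι → β → α} {a : ι → α}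
    (h : ∀ i ∈ s, HasSum (f i) (a i)) :
    HasSum (fun b => (s.map fun i => f i b).sum) (s.map a).sum := by
  induction s using Multiset.induction_on with
  | empty => simp
  | cons i s ih =>
    simpa using (h i (s.mem_cons_self i)).add (ih fun j hj => h j (Multiset.mem_cons_of_mem hj))

lemma one_sub_ne_zero_of_norm_lt_one {R : Type*} [SeminormedRing R] [NormOneClass R] {z : R}
    (hz : ‖z‖ < 1) : 1 - z ≠ 0 := fun h => by
  rw [← sub_eq_zero.1 h, norm_one] at hz
  exact hz.false

lemma eventually_norm_mul_lt_one (c : ℝ) : ∀ᶠ u : ℂ in 𝓝 0, ‖u‖ * c < 1 := by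
  have h : Continuous fun u : ℂ => ‖u‖ * c := by fun_prop
  exact (h.tendsto' 0 0 (by simp)).eventually_lt_const one_pos

open Complex in
lemma hasSum_pow_succ_div_eq_neg_log {z : ℂ} (hz : ‖z‖ < 1) :
    HasSum (fun k : ℕ => z ^ (k + 1) / (k + 1)) (-log (1 - z)) := by
  simpa using (hasSum_nat_add_iff' 1).2 (hasSum_taylorSeries_neg_log hz)

open Complex in
lemma hasProd_of_hasSum_neg_log {ι : Type*} {f : ι → ℂ} {S : ℂ} (hf : ∀ i, f i ≠ 0)
    (h : HasSum (fun i => -log (f i)) S) : HasProd f (cexp (-S)) := by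
  simpa [Function.comp_def, exp_log (hf _)] using h.neg.cexp

section Eigenvalues

open Polynomial

variable {n : Type*} [Fintype n] [DecidableEq n]

lemma card_roots_charpoly (M : Matrix n n ℂ) :
    Multiset.card M.charpoly.roots = Fintype.card n := by
  rw [← M.charpoly_natDegree_eq_dim]
  exact splits_iff_card_roots.1 (IsAlgClosed.splits _)

lemma det_sub_scalar_eq_prod_roots (M : Matrix n n ℂ) (μ : ℂ) :
    (M - scalar n μ).det = (M.charpoly.roots.map (· - μ)).prod := by
  have h := (IsAlgClosed.splits M.charpoly).eval_eq_prod_roots_of_monic M.charpoly_monic μ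
  rw [eval_charpoly] at h
  rw [← neg_sub, det_neg, h, ← card_roots_charpoly M, ← Multiset.card_map (μ - ·),
    ← Multiset.prod_map_neg, Multiset.map_map]
  simp

lemma det_aeval_eq_prod_roots (M : Matrix n n ℂ) (p : ℂ[X]) :
    (aeval M p).det = (M.charpoly.roots.map p.eval).prod := by
  let detAeval : ℂ[X] →* ℂ := detMonoidHom.comp (aeval M).toMonoidHom
  have hC : detAeval (C p.leadingCoeff) = p.leadingCoeff ^ Fintype.card n := by
    simp [detAeval, Algebra.algebraMap_eq_smul_one]
  have hlin (μ : ℂ) : detAeval (X - C μ) = (M.charpoly.roots.map (· - μ)).prod := by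
    simp [detAeval, Algebra.algebraMap_eq_smul_one, ← det_sub_scalar_eq_prod_roots,
      smul_one_eq_diagonal]
  change detAeval p = _
  conv_lhs => rw [(IsAlgClosed.splits p).eq_prod_roots]
  rw [map_mul, map_multiset_prod, Multiset.map_map, hC, Function.comp_def]
  simp only [hlin]
  rw [Multiset.prod_map_prod_map, ← card_roots_charpoly M, ← Multiset.prod_replicate,
    ← Multiset.map_const', ← Multiset.prod_map_mul]
  refine congrArg _ (Multiset.map_congr rfl fun x _ => ?_)
  rw [(IsAlgClosed.splits p).eval_eq_prod_roots]

lemma det_one_sub_smul_eq_prod_roots (M : Matrix n n ℂ) (u : ℂ) :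
    (1 - u • M).det = (M.charpoly.roots.map (1 - u * ·)).prod := by
  have h := det_aeval_eq_prod_roots M (1 - C u * X)
  simp only [map_sub, map_one, map_mul, aeval_C, aeval_X, eval_sub, eval_one, eval_mul, eval_C,
    eval_X] at h
  rwa [Algebra.smul_def]

lemma charpoly_pow_eq_prod_roots (M : Matrix n n ℂ) (j : ℕ) :
    (M ^ j).charpoly = ((M.charpoly.roots.map (· ^ j)).map (X - C ·)).prod := by
  refine Polynomial.funext fun x => ?_
  have h := det_aeval_eq_prod_roots M (C x - X ^ j)
  simp only [map_sub, aeval_C, aeval_X_pow, eval_sub, eval_C, eval_pow, eval_X] at h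
  rw [eval_charpoly, eval_multiset_prod, Multiset.map_map, Multiset.map_map]
  simpa [Algebra.algebraMap_eq_smul_one, smul_one_eq_diagonal] using h

lemma trace_pow_eq_sum_roots (M : Matrix n n ℂ) (j : ℕ) :
    (M ^ j).trace = (M.charpoly.roots.map (· ^ j)).sum := by
  rw [trace_eq_sum_roots_charpoly, charpoly_pow_eq_prod_roots, roots_multiset_prod_X_sub_C]

open Complex in
lemma eventually_exists_hasSum_trace_pow_and_cexp_eq_det (M : Matrix n n ℂ) :
    ∀ᶠ u in 𝓝 (0 : ℂ), ∃ S,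
      HasSum (fun k : ℕ => u ^ (k + 1) * (M ^ (k + 1)).trace / (k + 1)) S ∧
        cexp (-S) = (1 - u • M).det := by
  filter_upwards [(eventually_all_finset M.charpoly.roots.toFinset).2
    fun x _ => eventually_norm_mul_lt_one ‖x‖] with u hu
  simp only [Multiset.mem_toFinset, ← norm_mul] at hu
  refine ⟨(M.charpoly.roots.map fun x => -log (1 - u * x)).sum, ?_, ?_⟩
  · convert Multiset.hasSum_sum fun x hx => hasSum_pow_succ_div_eq_neg_log (hu x hx) with k
    simp [trace_pow_eq_sum_roots, Multiset.sum_map_mul_left, mul_pow, div_eq_mul_inv,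
      Multiset.sum_map_mul_right]
  · simp only [det_one_sub_smul_eq_prod_roots, ← Multiset.sum_map_neg, neg_neg, exp_multiset_sum,
      Multiset.map_map, Function.comp_def]
    exact congrArg _ <| Multiset.map_congr rfl fun x hx =>
      exp_log (one_sub_ne_zero_of_norm_lt_one (hu x hx))

end Eigenvalues

section Trace

variable {A R : Type*} [Fintype A] [DecidableEq A] [CommSemiring R]

lemma pow_succ_apply_eq_sum (M : Matrix A A R) (n : ℕ) (a b : A) :
    (M ^ (n + 1)) a b = ∑ c : Fin n → A,
      ∏ i, M ((Fin.cons a c : Fin (n + 1) → A) i) ((Fin.snoc c b : Fin (n + 1) → A) i) := by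
  induction n generalizing a with
  | zero => simp [Fin.snoc]
  | succ n ih =>
    rw [pow_succ', mul_apply, ← (Fin.consEquiv fun _ => A).sum_comp, Fintype.sum_prod_type]
    refine sum_congr rfl fun x _ => ?_
    simp [ih, Fin.prod_univ_succ, mul_sum, Fin.consEquiv, ← Fin.cons_snoc_eq_snoc_cons]

lemma trace_pow_succ_eq_sum (M : Matrix A A R) (n : ℕ) :
    (M ^ (n + 1)).trace = ∑ c : Fin (n + 1) → A, ∏ i, M (c i) (c (i + 1)) := by
  rw [trace, ← (Fin.consEquiv fun _ => A).sum_comp, Fintype.sum_prod_type]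
  simp [pow_succ_apply_eq_sum, Fin.consEquiv, Fin.snoc_eq_cons_rotate]

end Trace

def seqShift {α : Type*} (f : ℕ → α) : ℕ → α := fun i => f (i + 1)

section Shift

variable {α : Type*} {f : ℕ → α} {L : ℕ}

@[simp]
lemma iterate_seqShift_apply (f : ℕ → α) (k i : ℕ) : seqShift^[k] f i = f (i + k) := by
  induction k generalizing f with
  | zero => rfl
  | succ k ih => rw [iterate_succ_apply, ih]; rfl

lemma isPeriodicPt_seqShift_iff : IsPeriodicPt seqShift L f ↔ Periodic f L := by
  simp [IsPeriodicPt, IsFixedPt, funext_iff, Periodic]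

lemma Function.Periodic.iterate_seqShift (hf : Periodic f L) (k : ℕ) :
    Periodic (seqShift^[k] f) L :=
  isPeriodicPt_seqShift_iff.1 ((isPeriodicPt_seqShift_iff.2 hf).apply_iterate k)

end Shift

section Weight

variable {A R : Type*} [CommMonoid R]

def seqWeight (M : Matrix A A R) (L : ℕ) (f : ℕ → A) : R :=
  ∏ i ∈ range L, M (f i) (f (i + 1))

variable {M : Matrix A A R} {L : ℕ} {f : ℕ → A}

lemma seqWeight_seqShift (hf : Periodic f L) : seqWeight M L (seqShift f) = seqWeight M L f := by
  cases L with
  | zero => rfl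
  | succ L =>
    rw [seqWeight, seqWeight, prod_range_succ, prod_range_succ']
    simp only [seqShift, ← hf 0, ← hf 1, zero_add, add_comm 1]

lemma seqWeight_iterate_seqShift (hf : Periodic f L) (k : ℕ) :
    seqWeight M L (seqShift^[k] f) = seqWeight M L f := by
  induction k with
  | zero => rfl
  | succ k ih => rw [iterate_succ_apply', seqWeight_seqShift (hf.iterate_seqShift k), ih]

lemma seqWeight_mul (hf : Periodic f L) (r : ℕ) :
    seqWeight M (r * L) f = seqWeight M L f ^ r := by
  induction r with
  | zero => simp [seqWeight]
  | succ r ih =>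
    have hrL : Periodic f (r * L) := by simpa using hf.nat_mul r
    rw [add_mul, one_mul, seqWeight, prod_range_add, ← seqWeight, ih, pow_succ]
    congr 1
    refine prod_congr rfl fun i _ => ?_
    rw [add_comm (r * L), hrL, add_right_comm, hrL]

end Weight

lemma composable_of_seqWeight_ne_zero {V A : Type*} {o t : A → V} {M : Matrix A A ℂ}
    (hM : ∀ e f, t e ≠ o f → M e f = 0) {L : ℕ} {f : ℕ → A} (hL : 0 < L)
    (hf : Periodic f L) (h : seqWeight M L f ≠ 0) (i : ℕ) : t (f i) = o (f (i + 1)) := by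
  rw [← hf.map_mod_nat i, ← hf.map_mod_nat (i + 1), ← Nat.mod_add_mod,
    hf.map_mod_nat (i % L + 1)]
  by_contra hne
  exact prod_ne_zero_iff.1 h (i % L) (mem_range.2 (Nat.mod_lt i hL)) (hM _ _ hne)

open scoped Matrix.Norms.Elementwise in
lemma norm_seqWeight_le {A : Type*} [Fintype A] (M : Matrix A A ℂ) (L : ℕ) (f : ℕ → A) :
    ‖seqWeight M L f‖ ≤ ‖M‖ ^ L := by
  simp only [seqWeight, norm_prod]
  calc ∏ i ∈ range L, ‖M (f i) (f (i + 1))‖ ≤ ∏ _i ∈ range L, ‖M‖ :=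
        prod_le_prod (fun i _ => norm_nonneg _) fun i _ => M.norm_entry_le_entrywise_sup_norm
    _ = ‖M‖ ^ L := by rw [prod_const, card_range]

open scoped Matrix.Norms.Elementwise in
lemma eventually_norm_seqWeight_mul_pow_lt_one {A : Type*} [Fintype A] (M : Matrix A A ℂ) :
    ∀ᶠ u : ℂ in 𝓝 0, ∀ L, 0 < L → ∀ f : ℕ → A,
      ‖seqWeight M L f * u ^ L‖ < 1 := by
  filter_upwards [eventually_norm_mul_lt_one ‖M‖] with u hu L hL f
  calc ‖seqWeight M L f * u ^ L‖ ≤ ‖M‖ ^ L * ‖u‖ ^ L := by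
        rw [norm_mul, norm_pow]; gcongr; exact norm_seqWeight_le M L f
    _ = (‖u‖ * ‖M‖) ^ L := by ring
    _ < 1 := pow_lt_one₀ (by positivity) hu hL.ne'

def finFunEquivPeriodic (A : Type*) (n : ℕ) :
    (Fin (n + 1) → A) ≃ {f : ℕ → A // Periodic f (n + 1)} where
  toFun c := ⟨fun k => c (Fin.ofNat _ k), fun k => congrArg c (Fin.ext (by simp))⟩
  invFun f i := f.1 i
  left_inv c := funext fun i => by simp
  right_inv f := Subtype.ext <| funext fun k => by simp [f.2.map_mod_nat]

@[simp]
lemma finFunEquivPeriodic_apply_coe {A : Type*} {n : ℕ} (c : Fin (n + 1) → A) (k : ℕ) :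
    (finFunEquivPeriodic A n c : ℕ → A) k = c (Fin.ofNat _ k) :=
  rfl

lemma hasSum_seqWeight_periodic {A R : Type*} [Fintype A] [DecidableEq A] [CommSemiring R]
    [TopologicalSpace R] (M : Matrix A A R) (n : ℕ) :
    HasSum (fun f : {f : ℕ → A // Periodic f (n + 1)} => seqWeight M (n + 1) f)
      (M ^ (n + 1)).trace := by
  rw [← (finFunEquivPeriodic A n).hasSum_iff, trace_pow_succ_eq_sum]
  convert hasSum_fintype _ with c
  simp only [Function.comp_apply, seqWeight, finFunEquivPeriodic_apply_coe,
    ← Fin.prod_univ_eq_prod_range]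
  refine prod_congr rfl fun i _ => ?_
  congr 2 <;> ext <;> simp [Fin.val_add]

/-- Closed walks of length `n + 1`, as periodic sequences of arcs. -/
abbrev ClosedWalk (A : Type*) := Σ n : ℕ, {f : ℕ → A // Periodic f (n + 1)}

noncomputable def closedWalkTerm {A : Type*} (M : Matrix A A ℂ) (u : ℂ) (w : ClosedWalk A) :
    ℂ :=
  u ^ (w.1 + 1) * seqWeight M (w.1 + 1) w.2 / ((w.1 + 1 : ℕ) : ℂ)

open scoped Matrix.Norms.Elementwise in
lemma eventually_summable_closedWalkTerm {A : Type*} [Fintype A] (M : Matrix A A ℂ) :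
    ∀ᶠ u : ℂ in 𝓝 0, Summable (closedWalkTerm M u) := by
  filter_upwards [eventually_norm_mul_lt_one (Fintype.card A * ‖M‖)] with u hu
  have hbound (w : ClosedWalk A) :
      ‖closedWalkTerm M u w‖ ≤ (‖u‖ * ‖M‖) ^ (w.1 + 1) := by
    rw [closedWalkTerm, norm_div, norm_mul, norm_pow, mul_pow]
    refine div_le_of_le_mul₀ (norm_nonneg _) (by positivity) ?_
    have h1 : (1 : ℝ) ≤ ‖((w.1 + 1 : ℕ) : ℂ)‖ := by
      rw [Complex.norm_natCast]; exact_mod_cast w.1.succ_pos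
    calc ‖u‖ ^ (w.1 + 1) * ‖seqWeight M (w.1 + 1) w.2‖
        ≤ ‖u‖ ^ (w.1 + 1) * ‖M‖ ^ (w.1 + 1) := by gcongr; exact norm_seqWeight_le M _ _
      _ ≤ _ := le_mul_of_one_le_right (by positivity) h1
  refine Summable.of_norm_bounded ?_ hbound
  refine (summable_sigma_of_nonneg fun _ => by positivity).2 ⟨fun n => ?_, ?_⟩
  · have : Finite {f : ℕ → A // Periodic f (n + 1)} := .of_equiv _ (finFunEquivPeriodic A n)
    exact .of_finite
  · refine ((summable_geometric_of_lt_one (by positivity) hu).comp_injective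
      (add_left_injective 1)).congr fun n => ?_
    dsimp only [Function.comp_apply]
    rw [tsum_const, ← Nat.card_congr (finFunEquivPeriodic A n), Nat.card_eq_fintype_card,
      Fintype.card_fun, Fintype.card_fin, nsmul_eq_mul]
    push_cast
    ring

lemma hasSum_closedWalkTerm {A : Type*} [Fintype A] [DecidableEq A] {M : Matrix A A ℂ} {u S : ℂ}
    (hsum : Summable (closedWalkTerm M u))
    (hS : HasSum (fun k : ℕ => u ^ (k + 1) * (M ^ (k + 1)).trace / (k + 1)) S) :
    HasSum (closedWalkTerm M u) S := by
  convert hsum.hasSum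
  refine hS.unique (hsum.hasSum.sigma fun n => ?_)
  simpa [closedWalkTerm] using
    ((hasSum_seqWeight_periodic M n).mul_left (u ^ (n + 1))).div_const ((n : ℂ) + 1)

namespace GraphCycle

variable {V A : Type*} {o t : A → V}

lemma weight_eq_seqWeight (U : Matrix A A ℂ) (C : GraphCycle o t) :
    C.weight U = seqWeight U C.len C.arcs :=
  rfl

lemma isPeriodicPt (C : GraphCycle o t) : IsPeriodicPt seqShift C.len C.arcs :=
  isPeriodicPt_seqShift_iff.2 C.periodic

lemma isPrime_iff_minimalPeriod_eq (C : GraphCycle o t) :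
    C.IsPrime ↔ minimalPeriod seqShift C.arcs = C.len := by
  refine ⟨fun hC => (C.isPeriodicPt.minimalPeriod_le C.pos).antisymm ?_, fun h d hd hdC => ?_⟩
  · by_contra! hlt
    obtain ⟨i, hi⟩ := hC _ (C.isPeriodicPt.minimalPeriod_pos C.pos) hlt
    exact hi (isPeriodicPt_seqShift_iff.1 (isPeriodicPt_minimalPeriod _ _) i)
  · by_contra! hper
    exact (h ▸ hdC).not_ge ((isPeriodicPt_seqShift_iff.2 hper).minimalPeriod_le hd)

lemma Equiv.refl (C : GraphCycle o t) : C.Equiv C := ⟨rfl, 0, fun _ => rfl⟩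

lemma equiv_of_iterate_eq {C D : GraphCycle o t} (hC : C.IsPrime) (hD : D.IsPrime) {k l : ℕ}
    (h : seqShift^[k] C.arcs = seqShift^[l] D.arcs) : C.Equiv D := by
  have hCper : C.arcs ∈ periodicPts seqShift := ⟨_, C.pos, C.isPeriodicPt⟩
  have hDper : D.arcs ∈ periodicPts seqShift := ⟨_, D.pos, D.isPeriodicPt⟩
  have horbit : periodicOrbit seqShift C.arcs = periodicOrbit seqShift D.arcs := by
    rw [← periodicOrbit_apply_iterate_eq hCper k, h, periodicOrbit_apply_iterate_eq hDper]
  refine ⟨?_, ?_⟩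
  · rw [← C.isPrime_iff_minimalPeriod_eq.1 hC, ← D.isPrime_iff_minimalPeriod_eq.1 hD,
      ← periodicOrbit_length, horbit, periodicOrbit_length]
  · have hmem := self_mem_periodicOrbit hDper
    rw [← horbit, mem_periodicOrbit_iff hCper] at hmem
    obtain ⟨k, hk⟩ := hmem
    exact ⟨k, fun j => by rw [← hk, iterate_seqShift_apply]⟩

variable {R : Set (GraphCycle o t)}

lemma eq_of_mem_of_equiv (hR : ∀ C : GraphCycle o t, C.IsPrime → ∃! D, D ∈ R ∧ C.Equiv D)
    {D D' : GraphCycle o t} (hD : D ∈ R) (hD' : D' ∈ R) (hprime : D.IsPrime)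
    (h : D.Equiv D') : D = D' :=
  (hR D hprime).unique ⟨hD, .refl D⟩ ⟨hD', h⟩

lemma eq_of_mem_of_iterate_eq (hR₁ : ∀ D ∈ R, D.IsPrime)
    (hR₂ : ∀ C : GraphCycle o t, C.IsPrime → ∃! D, D ∈ R ∧ C.Equiv D)
    {D D' : GraphCycle o t} (hD : D ∈ R) (hD' : D' ∈ R) {k k' : ℕ} (hk : k < D.len)
    (hk' : k' < D'.len) (h : seqShift^[k] D.arcs = seqShift^[k'] D'.arcs) :
    D = D' ∧ k = k' := by
  obtain rfl := eq_of_mem_of_equiv hR₂ hD hD' (hR₁ D hD)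
    (equiv_of_iterate_eq (hR₁ D hD) (hR₁ D' hD') h)
  rw [← (D.isPrime_iff_minimalPeriod_eq).1 (hR₁ D hD)] at hk hk'
  exact ⟨rfl, (iterate_eq_iterate_iff_of_lt_minimalPeriod hk hk').1 h⟩

lemma exists_mem_iterate_eq
    (hR : ∀ C : GraphCycle o t, C.IsPrime → ∃! D, D ∈ R ∧ C.Equiv D)
    {f : ℕ → A} {L : ℕ} (hL : 0 < L) (hf : Periodic f L)
    (hcomp : ∀ i, t (f i) = o (f (i + 1))) :
    ∃ D ∈ R, D.len = minimalPeriod seqShift f ∧ ∃ k < D.len, seqShift^[k] D.arcs = f := by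
  have hfper : f ∈ periodicPts seqShift := ⟨L, hL, isPeriodicPt_seqShift_iff.2 hf⟩
  let C : GraphCycle o t :=
    ⟨minimalPeriod seqShift f, minimalPeriod_pos_of_mem_periodicPts hfper, f,
      isPeriodicPt_seqShift_iff.1 (isPeriodicPt_minimalPeriod _ _), hcomp⟩
  obtain ⟨D, ⟨hD, hlen, j, hj⟩, -⟩ := hR C ((C.isPrime_iff_minimalPeriod_eq).2 rfl)
  have hDf : D.arcs = seqShift^[j] f := funext fun i => by rw [hj, iterate_seqShift_apply]
  have hDper : D.arcs ∈ periodicPts seqShift := ⟨_, D.pos, D.isPeriodicPt⟩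
  have hmem : f ∈ periodicOrbit seqShift D.arcs := by
    rw [hDf, periodicOrbit_apply_iterate_eq hfper]
    exact self_mem_periodicOrbit hfper
  obtain ⟨k, hk⟩ := (mem_periodicOrbit_iff hDper).1 hmem
  have hDmin : minimalPeriod seqShift D.arcs = D.len := by
    rw [hDf, minimalPeriod_apply_iterate hfper]; exact hlen
  refine ⟨D, hD, hlen.symm, k % D.len, Nat.mod_lt _ D.pos, ?_⟩
  rw [← hDmin, iterate_mod_minimalPeriod_eq, hk]

end GraphCycle

section PrimePowers

variable {V A : Type*} {o t : A → V} {R : Set (GraphCycle o t)}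

abbrev PrimePowerIndex (R : Set (GraphCycle o t)) := Σ p : R × ℕ, Fin p.1.1.len

namespace PrimePowerIndex

lemma len_pos (x : PrimePowerIndex R) : 0 < (x.1.2 + 1) * x.1.1.1.len :=
  Nat.mul_pos x.1.2.succ_pos x.1.1.1.pos

/-- For `x = ⟨(D, r), k⟩`: the closed walk that runs `r + 1` times around `D`, starting at its
`k`-th arc. -/
def toClosedWalk (x : PrimePowerIndex R) : ClosedWalk A :=
  ⟨(x.1.2 + 1) * x.1.1.1.len - 1, seqShift^[x.2] x.1.1.1.arcs, by
    rw [Nat.sub_add_cancel x.len_pos]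
    simpa using (Periodic.iterate_seqShift x.1.1.1.periodic x.2).nat_mul (x.1.2 + 1)⟩

lemma toClosedWalk_fst_add_one (x : PrimePowerIndex R) :
    x.toClosedWalk.1 + 1 = (x.1.2 + 1) * x.1.1.1.len :=
  Nat.sub_add_cancel x.len_pos

lemma closedWalkTerm_toClosedWalk (U : Matrix A A ℂ) (u : ℂ) (x : PrimePowerIndex R) :
    closedWalkTerm U u x.toClosedWalk =
      (x.1.1.1.weight U * u ^ x.1.1.1.len) ^ (x.1.2 + 1) / ((x.1.2 + 1) * x.1.1.1.len : ℕ) := by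
  obtain ⟨⟨⟨D, hD⟩, r⟩, k⟩ := x
  have hL := toClosedWalk_fst_add_one (R := R) ⟨⟨⟨D, hD⟩, r⟩, k⟩
  simp only [closedWalkTerm, hL]
  show u ^ _ * seqWeight U _ (seqShift^[k] D.arcs) / _ = _
  rw [seqWeight_mul (Periodic.iterate_seqShift D.periodic k), seqWeight_iterate_seqShift D.periodic,
    D.weight_eq_seqWeight]
  push_cast
  ring

lemma toClosedWalk_injective (hR₁ : ∀ D ∈ R, D.IsPrime)
    (hR₂ : ∀ C : GraphCycle o t, C.IsPrime → ∃! D, D ∈ R ∧ C.Equiv D) :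
    Injective (toClosedWalk (R := R)) := by
  intro x x' h
  have hlen := x.toClosedWalk_fst_add_one
  rw [h, x'.toClosedWalk_fst_add_one] at hlen
  obtain ⟨⟨⟨D, hD⟩, r⟩, k⟩ := x
  obtain ⟨⟨⟨D', hD'⟩, r'⟩, k'⟩ := x'
  obtain ⟨rfl, hk⟩ := GraphCycle.eq_of_mem_of_iterate_eq hR₁ hR₂ hD hD' k.2 k'.2
    (congrArg (fun w => w.2.1) h)
  obtain rfl : r = r' := by simpa using (Nat.eq_of_mul_eq_mul_right D.pos hlen).symm
  obtain rfl : k = k' := Fin.ext hk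
  rfl

lemma mem_range_toClosedWalk {U : Matrix A A ℂ} (hU : ∀ e f, t e ≠ o f → U e f = 0)
    (hR : ∀ C : GraphCycle o t, C.IsPrime → ∃! D, D ∈ R ∧ C.Equiv D) {u : ℂ}
    {w : ClosedWalk A} (hw : closedWalkTerm U u w ≠ 0) :
    w ∈ Set.range (toClosedWalk (R := R)) := by
  obtain ⟨n, f, hf⟩ := w
  have hweight : seqWeight U (n + 1) f ≠ 0 := fun h => hw (by simp [closedWalkTerm, h])
  obtain ⟨D, hD, hlen, k, hk, rfl⟩ := GraphCycle.exists_mem_iterate_eq hR n.succ_pos hf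
    (composable_of_seqWeight_ne_zero hU n.succ_pos hf hweight)
  obtain ⟨q, hq⟩ : D.len ∣ n + 1 :=
    hlen ▸ (isPeriodicPt_seqShift_iff.2 hf).minimalPeriod_dvd
  have hq₀ : q ≠ 0 := by rintro rfl; simp at hq
  refine ⟨⟨⟨⟨D, hD⟩, q - 1⟩, ⟨k, hk⟩⟩, Sigma.subtype_ext ?_ rfl⟩
  simp only [toClosedWalk, Nat.sub_add_cancel (Nat.one_le_iff_ne_zero.2 hq₀)]
  rw [mul_comm, ← hq, Nat.add_sub_cancel]

end PrimePowerIndex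

open Complex in
lemma hasSum_neg_log_one_sub_weight {U : Matrix A A ℂ} (hU : ∀ e f, t e ≠ o f → U e f = 0)
    (hR₁ : ∀ D ∈ R, D.IsPrime)
    (hR₂ : ∀ C : GraphCycle o t, C.IsPrime → ∃! D, D ∈ R ∧ C.Equiv D) {u S : ℂ}
    (hsmall : ∀ D : GraphCycle o t, ‖D.weight U * u ^ D.len‖ < 1)
    (hS : HasSum (closedWalkTerm U u) S) :
    HasSum (fun D : R => -log (1 - D.1.weight U * u ^ D.1.len)) S := by
  have hindex : HasSum (closedWalkTerm U u ∘ PrimePowerIndex.toClosedWalk (R := R)) S :=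
    ((PrimePowerIndex.toClosedWalk_injective hR₁ hR₂).hasSum_iff fun w hw =>
      not_not.1 (mt (PrimePowerIndex.mem_range_toClosedWalk hU hR₂) hw)).2 hS
  have hpowers :
      HasSum (fun p : R × ℕ => (p.1.1.weight U * u ^ p.1.1.len) ^ (p.2 + 1) / (p.2 + 1)) S := by
    refine hindex.sigma fun p => ?_
    convert hasSum_fintype fun k : Fin p.1.1.len =>
      (closedWalkTerm U u ∘ PrimePowerIndex.toClosedWalk) ⟨p, k⟩ using 1
    have hlen : (p.1.1.len : ℂ) ≠ 0 := Nat.cast_ne_zero.2 p.1.1.pos.ne'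
    simp only [Function.comp_apply, PrimePowerIndex.closedWalkTerm_toClosedWalk, sum_const,
      card_univ, Fintype.card_fin, nsmul_eq_mul]
    push_cast
    field_simp
  exact hpowers.prod_fiberwise fun D =>
    hasSum_pow_succ_div_eq_neg_log (z := D.1.weight U * u ^ D.1.len) (hsmall D)

end PrimePowers

theorem det_eq_euler_product_over_prime_cycles_general
    (V A : Type*) [Fintype A] [DecidableEq A]
    (o t : A → V) (U : Matrix A A ℂ)
    (hU : ∀ e f, t e ≠ o f → U e f = 0) :
    ∃ ε > (0 : ℝ), ∀ u : ℂ, ‖u‖ < ε →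
      ∀ R : Set (GraphCycle o t),
        (∀ D ∈ R, D.IsPrime) →
        (∀ C : GraphCycle o t, C.IsPrime → ∃! D, D ∈ R ∧ C.Equiv D) →
        HasProd (fun C : R => 1 - GraphCycle.weight U C.1 * u ^ C.1.len)
          ((1 - u • U).det) := by
  obtain ⟨ε, hε, hsmall⟩ := Metric.eventually_nhds_iff.1 <|
    (eventually_exists_hasSum_trace_pow_and_cexp_eq_det U).and <|
      (eventually_summable_closedWalkTerm U).and (eventually_norm_seqWeight_mul_pow_lt_one U)
  refine ⟨ε, hε, fun u hu R hR₁ hR₂ => ?_⟩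
  obtain ⟨⟨S, hS, hdet⟩, hsum, hweight⟩ := hsmall (by simpa using hu)
  have hcycle (D : GraphCycle o t) : ‖D.weight U * u ^ D.len‖ < 1 := hweight D.len D.pos D.arcs
  rw [← hdet]
  exact hasProd_of_hasSum_neg_log (fun D => one_sub_ne_zero_of_norm_lt_one (hcycle D))
    (hasSum_neg_log_one_sub_weight hU hR₁ hR₂ hcycle (hasSum_closedWalkTerm hsum hS))

/-- Euler product: for |u| small, det(I_{2m} - u·U) = ∏_{[C]} (1 - w_C u^{|C|}),
the product running over a set of representatives of the equivalence classes of
prime cycles of the graph. -/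
theorem det_eq_euler_product_over_prime_cycles
    (V A : Type*) [Fintype V] [Fintype A] [DecidableEq A]
    (m : ℕ) (hm : Fintype.card A = 2 * m)
    (o t : A → V) (U : Matrix A A ℂ)
    (hU : ∀ e f, t e ≠ o f → U e f = 0) :
    ∃ ε > (0 : ℝ), ∀ u : ℂ, ‖u‖ < ε →
      ∀ R : Set (GraphCycle o t),
        (∀ D ∈ R, D.IsPrime) →
        (∀ C : GraphCycle o t, C.IsPrime → ∃! D, D ∈ R ∧ C.Equiv D) →
        HasProd (fun C : R => 1 - GraphCycle.weight U C.1 * u ^ C.1.len)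
          ((1 - u • U).det) :=
  det_eq_euler_product_over_prime_cycles_general V A o t U hU
end

section
/- Let G be a finite connected graph with n vertices and m edges, Γ a finite group, α: D(G) → Γ an ordinary voltage assignment, and ρ a unitary representation of Γ of degree d. With H, h, γ, Γ_u, w, x as in the Gnutzmann–Smilansky setup, define H_g by (H_g)_{uv} = h_{uv}·e^{2iγ_{uv}} if (u,v) ∈ D(G) and α(u,v) = g, else 0; and U_g by (U_g)_{ef} = σ^{(t(e))}_{ef} if t(e)=o(f) and α(e)=g, else 0. Then det(I_{2md} - Σ_{g∈Γ} ρ(g) ⊗ U_g) = [(-1)^{nd}·2^{md} / ∏_{u} (H_{uu} - λ - i·Γ_u)^d]·det(λ·I_{nd} - Σ_{g∈Γ} ρ(g) ⊗ H_g - I_d ⊗ diag(H)). -/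
/-!
Let `P` be the arc-reversal matrix `e ↦ e⁻¹` twisted by `i ρ(α e)`, `R` the incidence of origins
weighted by `w`, and `L` the incidence of termini weighted by `ρ(α e) w(e) x_{t(e)}`. Then
`1 - Σ_g ρ(g) ⊗ U_g = (1 - P) + L R`. Since `P² = -1`, `1 - P` has inverse `(1 + P)/2`, and
`det(1 + AB) = det(1 + BA)` moves the determinant from the `2md`-dimensional arc space to the
`nd`-dimensional vertex space, where `R L` assembles `Σ_g ρ(g) ⊗ H_g` and `R P L` the diagonal
`iΓ_u x_u`. Finally `det(1 - P) = 2^{md}`: pairing every arc with its reverse puts `1 - P` in the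
block form `[[1, B], [C, 1]]` with `B C = -1`.
-/

open Matrix Kronecker

universe u

theorem Function.Involutive.exists_sum_equiv {A : Type u} {ι : A → A}
    (hι : Function.Involutive ι) (hfix : ∀ a, ι a ≠ a) :
    ∃ (S : Type u) (φ : S ⊕ S ≃ A), ∀ s, φ (.inr s) = ι (φ (.inl s)) := by
  classical
  let r : A → A → Prop := WellOrderingRel
  have hsplit : ∀ a, r a (ι a) ↔ ¬ r (ι a) (ι (ι a)) := fun a => by
    rw [hι a]
    refine ⟨asymm, fun h => ?_⟩
    rcases trichotomous_of r a (ι a) with h' | h' | h'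
    · exact h'
    · exact absurd h'.symm (hfix a)
    · exact absurd h' h
  exact ⟨{a // r a (ι a)},
    (Equiv.sumCongr (Equiv.refl _) ((hι.toPerm ι).subtypeEquiv hsplit)).trans
      (Equiv.sumCompl fun a => r a (ι a)), fun _ => rfl⟩

section Reversal

variable {m A R : Type*} [DecidableEq A]

def reversalMatrix [Zero R] (ι : A → A) (M : A → Matrix m m R) : Matrix (m × A) (m × A) R :=
  of fun p q => if q.2 = ι p.2 then M p.2 p.1 q.1 else 0

theorem reversalMatrix_mul_apply [Fintype m] [Fintype A] [NonUnitalNonAssocSemiring R]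
    {n : Type*} (ι : A → A) (M : A → Matrix m m R) (N : Matrix (m × A) n R) (i : m) (a : A)
    (q : n) : (reversalMatrix ι M * N) (i, a) q = ∑ k, M a i k * N (k, ι a) q := by
  simp [mul_apply, Fintype.sum_prod_type, reversalMatrix, ite_mul]

theorem reversalMatrix_mul_self [Fintype m] [DecidableEq m] [Fintype A] [Ring R] {ι : A → A}
    (hι : Function.Involutive ι) {M : A → Matrix m m R} (hM : ∀ a, M a * M (ι a) = -1) :
    reversalMatrix ι M * reversalMatrix ι M = -1 := by
  ext ⟨i, a⟩ ⟨k, b⟩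
  rw [reversalMatrix_mul_apply]
  simp only [reversalMatrix, of_apply, hι a, mul_ite, mul_zero, Finset.sum_ite_irrel,
    Finset.sum_const_zero, ← mul_apply, hM]
  by_cases hba : b = a <;> simp [hba, Ne.symm, one_apply, Prod.ext_iff]

theorem det_one_sub_reversalMatrix [Fintype m] [DecidableEq m] [Fintype A] [CommRing R]
    {ι : A → A} (hι : Function.Involutive ι) (hfix : ∀ a, ι a ≠ a) {M : A → Matrix m m R}
    (hM : ∀ a, M a * M (ι a) = -1) {k : ℕ} (hk : Fintype.card A = 2 * k) :
    (1 - reversalMatrix ι M).det = 2 ^ (Fintype.card m * k) := by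
  classical
  obtain ⟨S, φ, hφ⟩ := hι.exists_sum_equiv hfix
  have hφ' : ∀ s, ι (φ (.inr s)) = φ (.inl s) := fun s => by rw [hφ, hι]
  have : Finite S := Finite.of_injective _ (φ.injective.comp Sum.inl_injective)
  let := Fintype.ofFinite S
  have hS : Fintype.card S = k := by
    have := Fintype.card_congr φ
    rw [Fintype.card_sum] at this
    omega
  let ψ : (m × S) ⊕ (m × S) ≃ m × A :=
    (Equiv.prodSumDistrib m S S).symm.trans ((Equiv.refl m).prodCongr φ)
  have hblocks : (1 - reversalMatrix ι M).submatrix ψ ψ =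
      fromBlocks 1 (-blockDiagonal fun s => M (φ (.inl s)))
        (-blockDiagonal fun s => M (φ (.inr s))) 1 := by
    ext (⟨i, s⟩ | ⟨i, s⟩) (⟨k, s'⟩ | ⟨k, s'⟩) <;>
      simp [ψ, reversalMatrix, blockDiagonal_apply, one_apply, ← hφ, hφ', eq_comm]
  rw [← det_submatrix_equiv_self ψ, hblocks, det_fromBlocks_one₂₂, neg_mul_neg,
    ← blockDiagonal_mul]
  simp only [hφ, hM]
  rw [show (blockDiagonal fun _ => -1 : Matrix (m × S) (m × S) R) = -1 from
      (blockDiagonal_neg _).trans (congrArg Neg.neg blockDiagonal_one),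
    sub_neg_eq_add, ← two_smul R, det_smul, det_one, mul_one, Fintype.card_prod, hS]

end Reversal

theorem det_one_sub_add_mul_of_mul_self_eq_neg_one {n p K : Type*} [Fintype n] [DecidableEq n]
    [Fintype p] [DecidableEq p] [Field K] [NeZero (2 : K)] {P : Matrix n n K}
    (hP : P * P = -1) (L : Matrix n p K) (R : Matrix p n K) :
    (1 - P + L * R).det = (1 - P).det * (1 + (2 : K)⁻¹ • (R * L + R * P * L)).det := by
  have hinv : (1 - P) * ((2 : K)⁻¹ • (1 + P)) = 1 := by
    rw [Matrix.mul_smul, show (1 - P) * (1 + P) = (2 : K) • 1 by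
      rw [two_smul, ← sub_neg_eq_add 1 (1 : Matrix n n K), ← hP]; noncomm_ring,
      smul_smul, inv_mul_cancel₀ two_ne_zero, one_smul]
  have hfactor : 1 - P + L * R = (1 - P) * (1 + ((2 : K)⁻¹ • (1 + P) * L) * R) := by
    rw [Matrix.mul_add, Matrix.mul_one, ← Matrix.mul_assoc, ← Matrix.mul_assoc, hinv,
      Matrix.one_mul]
  rw [hfactor, det_mul, det_one_add_mul_comm, Matrix.smul_mul, Matrix.mul_smul, Matrix.add_mul,
    Matrix.one_mul, Matrix.mul_add, Matrix.mul_assoc]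

theorem one_add_half_smul_mul_diagonal {n K : Type*} [Fintype n] [DecidableEq n] [Field K]
    [NeZero (2 : K)] (M : Matrix n n K) {a c y : n → K} (h : ∀ p, (a p - c p) * (y p / 2) = 1) :
    1 + (2 : K)⁻¹ • (M * diagonal y + diagonal fun p => c p * y p) =
      (M + diagonal a) * diagonal fun p => y p / 2 := by
  ext i j
  simp only [Matrix.add_apply, Matrix.smul_apply, mul_diagonal, diagonal_apply, one_apply,
    add_mul, smul_eq_mul]
  split_ifs with hij
  · subst hij
    linear_combination -h i
  · ring

theorem neg_smul_one_sub_sub_one_kronecker_diagonal {m n K : Type*} [DecidableEq m]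
    [DecidableEq n] [CommRing K] (M : Matrix (m × n) (m × n) K) (c : K) (f : n → K) :
    -(c • 1 - M - (1 : Matrix m m K) ⊗ₖ diagonal f) = M + diagonal fun p => f p.2 - c := by
  rw [smul_one_eq_diagonal, ← diagonal_one, diagonal_kronecker_diagonal, ← diagonal_sub]
  simp only [one_mul]
  abel

theorem sqrt_mul_exp_mul_sqrt_mul_exp {a : ℝ} (ha : 0 ≤ a) (θ φ : ℝ) :
    (Real.sqrt a * Complex.exp (Complex.I * θ)) * (Real.sqrt a * Complex.exp (Complex.I * φ)) =
      a * Complex.exp (Complex.I * ((θ + φ : ℝ) : ℂ)) := by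
  rw [mul_mul_mul_comm, ← Complex.ofReal_mul, Real.mul_self_sqrt ha, ← Complex.exp_add,
    Complex.ofReal_add, mul_add]

section GraphMatrices

variable {m V A Γ : Type*} [DecidableEq m] [DecidableEq V]

def originIncidence (o : A → V) (w : A → ℂ) : Matrix (m × V) (m × A) ℂ :=
  of fun p q => if p.1 = q.1 ∧ o q.2 = p.2 then w q.2 else 0

def terminalIncidence (t : A → V) (α : A → Γ) (ρ : Γ → Matrix m m ℂ) (w : A → ℂ) (x : V → ℂ) :
    Matrix (m × A) (m × V) ℂ :=
  of fun p q => if t p.2 = q.2 then ρ (α p.2) p.1 q.1 * w p.2 * x q.2 else 0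

variable [Fintype m]

theorem mul_originIncidence_apply [Fintype V] {X : Type*} (o : A → V) (w : A → ℂ)
    (N : Matrix X (m × V) ℂ) (p : X) (k : m) (f : A) :
    (N * originIncidence (m := m) o w) p (k, f) = N p (k, o f) * w f := by
  simp [mul_apply, Fintype.sum_prod_type, originIncidence, ite_and]

theorem originIncidence_mul_apply [Fintype A] {X : Type*} (o : A → V) (w : A → ℂ)
    (N : Matrix (m × A) X ℂ) (j : m) (u : V) (q : X) :
    (originIncidence (m := m) o w * N) (j, u) q =
      ∑ f, if o f = u then w f * N (j, f) q else 0 := by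
  simp [mul_apply, Fintype.sum_prod_type, originIncidence, ite_and]

theorem one_sub_sum_kronecker_eq [Fintype V] [DecidableEq A] [Fintype Γ] [DecidableEq Γ]
    {o t : A → V} {einv : A → A} (ho : ∀ e, o (einv e) = t e) (α : A → Γ)
    (ρ : Γ → Matrix m m ℂ) (w : A → ℂ) (x : V → ℂ) {Ug : Γ → Matrix A A ℂ}
    (hUg : ∀ g e f, Ug g e f = if t e = o f ∧ α e = g then
      (if f = einv e then Complex.I else 0) - x (t e) * w e * w f else 0) :
    1 - ∑ g, ρ g ⊗ₖ Ug g = 1 - reversalMatrix einv (fun e => Complex.I • ρ (α e)) +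
      terminalIncidence t α ρ w x * originIncidence (m := m) o w := by
  ext ⟨i, e⟩ ⟨k, f⟩
  simp only [Matrix.sub_apply, Matrix.add_apply, mul_originIncidence_apply, Matrix.sum_apply,
    kroneckerMap_apply, hUg, terminalIncidence, reversalMatrix, of_apply]
  by_cases hf : f = einv e
  · subst hf
    simp [ho, Matrix.smul_apply]
    ring
  · by_cases hto : t e = o f <;> simp [hf, hto]
    ring

theorem originIncidence_mul_terminalIncidence [Fintype V] [Fintype A] [Fintype Γ]
    [DecidableEq Γ] {o t : A → V} (α : A → Γ) (ρ : Γ → Matrix m m ℂ) {w c : A → ℂ}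
    (hw : ∀ e, w e * w e = c e) (x : V → ℂ) {Hg : Γ → Matrix V V ℂ}
    (hHg : ∀ g u v,
      Hg g u v = ∑ f ∈ Finset.univ.filter (fun f => o f = u ∧ t f = v ∧ α f = g), c f) :
    originIncidence (m := m) o w * terminalIncidence t α ρ w x =
      (∑ g, ρ g ⊗ₖ Hg g) * diagonal (fun p : m × V => x p.2) := by
  ext ⟨j, u⟩ ⟨k, v⟩
  rw [originIncidence_mul_apply, mul_diagonal, Matrix.sum_apply, Finset.sum_mul]
  simp only [kroneckerMap_apply, hHg, Finset.sum_filter, Finset.mul_sum, Finset.sum_mul]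
  rw [Finset.sum_comm]
  refine Finset.sum_congr rfl fun f _ => ?_
  by_cases hu : o f = u <;> by_cases hv : t f = v <;>
    simp [terminalIncidence, hu, hv, ← hw, mul_ite, Finset.sum_ite_eq]
  ring

theorem reversalMatrix_mul_terminalIncidence_apply [Fintype A] [DecidableEq A] [Group Γ]
    {o t : A → V} {einv : A → A} (hinv : Function.Involutive einv) (ho : ∀ e, o (einv e) = t e)
    {α : A → Γ} (hα : ∀ e, α (einv e) = (α e)⁻¹) {ρ : Γ → Matrix m m ℂ}
    (hρ : ∀ g, ρ g * ρ g⁻¹ = 1) (w : A → ℂ) (x : V → ℂ) (i : m) (e : A) (k : m) (v : V) :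
    (reversalMatrix einv (fun e => Complex.I • ρ (α e)) * terminalIncidence t α ρ w x) (i, e)
        (k, v) =
      if o e = v then Complex.I * (1 : Matrix m m ℂ) i k * w (einv e) * x v else 0 := by
  have ht : t (einv e) = o e := by rw [← ho, hinv]
  rw [reversalMatrix_mul_apply]
  simp only [terminalIncidence, of_apply, ht, hα, Matrix.smul_apply, smul_eq_mul, mul_ite,
    mul_zero, Finset.sum_ite_irrel, Finset.sum_const_zero]
  split_ifs
  · rw [← hρ (α e), mul_apply, Finset.mul_sum, Finset.sum_mul, Finset.sum_mul]
    exact Finset.sum_congr rfl fun _ _ => by ring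
  · rfl

theorem originIncidence_mul_reversalMatrix_mul_terminalIncidence [Fintype A] [DecidableEq A]
    [Group Γ] {o t : A → V} {einv : A → A} (hinv : Function.Involutive einv)
    (ho : ∀ e, o (einv e) = t e) {α : A → Γ} (hα : ∀ e, α (einv e) = (α e)⁻¹)
    {ρ : Γ → Matrix m m ℂ} (hρ : ∀ g, ρ g * ρ g⁻¹ = 1) {w b : A → ℂ}
    (hw : ∀ e, w e * w (einv e) = b e) (x : V → ℂ) :
    originIncidence (m := m) o w * reversalMatrix einv (fun e => Complex.I • ρ (α e)) *
        terminalIncidence t α ρ w x =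
      diagonal fun p : m × V =>
        Complex.I * (∑ f ∈ Finset.univ.filter (fun f => o f = p.2), b f) * x p.2 := by
  ext ⟨j, u⟩ ⟨k, v⟩
  rw [Matrix.mul_assoc, originIncidence_mul_apply]
  simp only [reversalMatrix_mul_terminalIncidence_apply hinv ho hα hρ, diagonal_apply,
    Prod.mk.injEq]
  by_cases huv : u = v
  · subst huv
    by_cases hjk : j = k
    · subst hjk
      simp only [and_self, if_true, one_apply_eq, mul_one, Finset.sum_filter, Finset.mul_sum,
        Finset.sum_mul]
      refine Finset.sum_congr rfl fun f _ => ?_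
      split_ifs
      · rw [← hw]; ring
      · ring
    · simp [hjk]
  · rw [if_neg fun h => huv h.2]
    refine Finset.sum_eq_zero fun f _ => ?_
    split_ifs with hu hv
    · exact absurd (hu.symm.trans hv) huv
    all_goals simp

end GraphMatrices

theorem L_function_determinant_general
    (V A : Type*) [Fintype V] [Fintype A] [DecidableEq V] [DecidableEq A]
    (n m : ℕ) (hn : Fintype.card V = n) (hm : Fintype.card A = 2 * m)
    (o t : A → V) (einv : A → A)
    (hinvol : ∀ e, einv (einv e) = e)
    (ho : ∀ e, o (einv e) = t e)
    (hloop : ∀ e, o e ≠ t e)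
    (Γ : Type*) [Group Γ] [Fintype Γ] [DecidableEq Γ]
    (α : A → Γ) (hα : ∀ e, α (einv e) = (α e)⁻¹)
    (d : ℕ) (ρ : Γ → Matrix (Fin d) (Fin d) ℂ)
    (hρ1 : ρ 1 = 1) (hρmul : ∀ g g', ρ (g * g') = ρ g * ρ g')
    (h γ : A → ℝ) (hpos : ∀ e, 0 ≤ h e)
    (hh : ∀ e, h (einv e) = h e) (hγ : ∀ e, γ (einv e) = -γ e)
    (w : A → ℂ) (hw : ∀ e, w e = Real.sqrt (h e) * Complex.exp (Complex.I * γ e))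
    (H : Matrix V V ℂ)
    (Hg : Γ → Matrix V V ℂ)
    (hHg : ∀ g u v, Hg g u v =
      ∑ f ∈ Finset.univ.filter (fun f => o f = u ∧ t f = v ∧ α f = g),
        (h f : ℂ) * Complex.exp (2 * Complex.I * γ f))
    (Gam : V → ℝ)
    (hGam : ∀ u, Gam u = ∑ e ∈ Finset.univ.filter (fun e => o e = u), h e)
    (lam : ℂ)
    (hne : ∀ u, H u u - lam - Complex.I * Gam u ≠ 0)
    (x : V → ℂ) (hx : ∀ u, x u = 2 / (H u u - lam - Complex.I * Gam u))
    (Ug : Γ → Matrix A A ℂ)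
    (hUg : ∀ g e f, Ug g e f = if t e = o f ∧ α e = g then
      (if f = einv e then Complex.I else 0) - x (t e) * w e * w f else 0) :
    (1 - ∑ g : Γ, ρ g ⊗ₖ Ug g).det =
      (-1 : ℂ) ^ (n * d) * 2 ^ (m * d) /
          (∏ u : V, (H u u - lam - Complex.I * Gam u)) ^ d *
        (lam • (1 : Matrix (Fin d × V) (Fin d × V) ℂ) -
          (∑ g : Γ, ρ g ⊗ₖ Hg g) -
          (1 : Matrix (Fin d) (Fin d) ℂ) ⊗ₖ Matrix.diagonal (fun u => H u u)).det := by
  have hρinv : ∀ g, ρ g * ρ g⁻¹ = 1 := fun g => by rw [← hρmul, mul_inv_cancel, hρ1]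
  have hM : ∀ e, (Complex.I • ρ (α e)) * (Complex.I • ρ (α (einv e))) = -1 := fun e => by
    rw [hα, smul_mul_smul_comm, hρinv, Complex.I_mul_I, neg_one_smul]
  have hfix : ∀ e, einv e ≠ e := fun e he => hloop e (by rw [← ho e, he])
  have hww : ∀ e, w e * w (einv e) = h e := fun e => by
    rw [hw, hw, hh, hγ, sqrt_mul_exp_mul_sqrt_mul_exp (hpos e), add_neg_cancel,
      Complex.ofReal_zero, mul_zero, Complex.exp_zero, mul_one]
  have hw2 : ∀ e, w e * w e = h e * Complex.exp (2 * Complex.I * γ e) := fun e => by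
    rw [hw, sqrt_mul_exp_mul_sqrt_mul_exp (hpos e), Complex.ofReal_add]
    ring_nf
  have hGamC : ∀ u, ∑ f ∈ Finset.univ.filter (fun f => o f = u), (h f : ℂ) = Gam u := fun u => by
    simp [hGam]
  have hxhalf : ∀ u, x u / 2 = (H u u - lam - Complex.I * Gam u)⁻¹ := fun u => by
    rw [hx, div_div_cancel_left' two_ne_zero]
  have hdiag : ∀ p : Fin d × V, (H p.2 p.2 - lam - Complex.I * Gam p.2) * (x p.2 / 2) = 1 :=
    fun p => by rw [hxhalf, mul_inv_cancel₀ (hne _)]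
  rw [one_sub_sum_kronecker_eq ho α ρ w x hUg,
    det_one_sub_add_mul_of_mul_self_eq_neg_one (reversalMatrix_mul_self hinvol hM),
    det_one_sub_reversalMatrix hinvol hfix hM hm,
    originIncidence_mul_terminalIncidence α ρ hw2 x hHg,
    originIncidence_mul_reversalMatrix_mul_terminalIncidence hinvol ho hα hρinv hww x]
  simp only [hGamC]
  rw [one_add_half_smul_mul_diagonal _ (a := fun p => H p.2 p.2 - lam) hdiag,
    ← neg_smul_one_sub_sub_one_kronecker_diagonal _ lam fun u => H u u, det_mul,
    det_neg, det_diagonal, Fintype.prod_prod_type]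
  simp only [hxhalf, Finset.prod_const, Finset.card_univ, Fintype.card_fin, Fintype.card_prod, hn,
    Finset.prod_inv_distrib]
  ring

/-- Determinant formula for the L-function: with the Gnutzmann–Smilansky setup,
a voltage assignment α : D(G) → Γ and a unitary representation ρ of degree d,
det(I_{2md} - Σ_g ρ(g) ⊗ U_g)
  = (-1)^{nd}·2^{md}/∏_u (H_{uu} - λ - iΓ_u)^d ·
    det(λI_{nd} - Σ_g ρ(g) ⊗ H_g - I_d ⊗ diag(H)). -/
theorem L_function_determinant
    (V A : Type*) [Fintype V] [Fintype A] [DecidableEq V] [DecidableEq A]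
    (n m : ℕ) (hn : Fintype.card V = n) (hm : Fintype.card A = 2 * m)
    (o t : A → V) (einv : A → A)
    (hinvol : ∀ e, einv (einv e) = e)
    (ho : ∀ e, o (einv e) = t e)
    (hloop : ∀ e, o e ≠ t e)
    (hconn : ∀ u v : V, Relation.ReflTransGen (fun a b => ∃ e, o e = a ∧ t e = b) u v)
    (Γ : Type*) [Group Γ] [Fintype Γ] [DecidableEq Γ]
    (α : A → Γ) (hα : ∀ e, α (einv e) = (α e)⁻¹)
    (d : ℕ) (ρ : Γ → Matrix (Fin d) (Fin d) ℂ)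
    (hρ1 : ρ 1 = 1) (hρmul : ∀ g g', ρ (g * g') = ρ g * ρ g')
    (hunitary : ∀ g, (ρ g)ᴴ * ρ g = 1)
    (h γ : A → ℝ) (hpos : ∀ e, 0 ≤ h e)
    (hh : ∀ e, h (einv e) = h e) (hγ : ∀ e, γ (einv e) = -γ e)
    (w : A → ℂ) (hw : ∀ e, w e = Real.sqrt (h e) * Complex.exp (Complex.I * γ e))
    (H : Matrix V V ℂ)
    (hHoff : ∀ u v, u ≠ v → H u v =
      ∑ f ∈ Finset.univ.filter (fun f => o f = u ∧ t f = v),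
        (h f : ℂ) * Complex.exp (2 * Complex.I * γ f))
    (hHdiag : ∀ u, (H u u).im = 0)
    (Hg : Γ → Matrix V V ℂ)
    (hHg : ∀ g u v, Hg g u v =
      ∑ f ∈ Finset.univ.filter (fun f => o f = u ∧ t f = v ∧ α f = g),
        (h f : ℂ) * Complex.exp (2 * Complex.I * γ f))
    (Gam : V → ℝ)
    (hGam : ∀ u, Gam u = ∑ e ∈ Finset.univ.filter (fun e => o e = u), h e)
    (lam : ℂ)
    (hne : ∀ u, H u u - lam - Complex.I * Gam u ≠ 0)
    (x : V → ℂ) (hx : ∀ u, x u = 2 / (H u u - lam - Complex.I * Gam u))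
    (Ug : Γ → Matrix A A ℂ)
    (hUg : ∀ g e f, Ug g e f = if t e = o f ∧ α e = g then
      (if f = einv e then Complex.I else 0) - x (t e) * w e * w f else 0) :
    (1 - ∑ g : Γ, ρ g ⊗ₖ Ug g).det =
      (-1 : ℂ) ^ (n * d) * 2 ^ (m * d) /
          (∏ u : V, (H u u - lam - Complex.I * Gam u)) ^ d *
        (lam • (1 : Matrix (Fin d × V) (Fin d × V) ℂ) -
          (∑ g : Γ, ρ g ⊗ₖ Hg g) -
          (1 : Matrix (Fin d) (Fin d) ℂ) ⊗ₖ Matrix.diagonal (fun u => H u u)).det :=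
  L_function_determinant_general V A n m hn hm o t einv hinvol ho hloop Γ α hα d ρ hρ1 hρmul h γ
    hpos hh hγ w hw H Hg hHg Gam hGam lam hne x hx Ug hUg
end

section
/- Let G be a finite connected graph with n vertices and m edges, Γ a finite group of order p, and α an ordinary voltage assignment, with Hermitian matrix H as in the Gnutzmann–Smilansky setup, and suppose G^α is connected. Then det(λ·I_{np} - H(G^α)) = det(λ·I_n - H)·∏_{i=2}^{k} det(λ·I_{n f_i} - Σ_{h∈Γ} ρ_i(h) ⊗ H_h - I_{f_i} ⊗ diag(H))^{f_i}, where ρ₁=1, ρ₂,…,ρ_k are the inequivalent irreducible representations of Γ with degrees f_i. -/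
open Matrix Kronecker

lemma my_det_blockDiagonal' {o : Type*} [Fintype o] [DecidableEq o]
    {m : o → Type*} [∀ i, Fintype (m i)] [∀ i, DecidableEq (m i)]
    (M : ∀ i, Matrix (m i) (m i) ℂ) :
    (Matrix.blockDiagonal' M).det = ∏ i, (M i).det := by
  classical
  set eo : o ≃ Fin (Fintype.card o) := Fintype.equivFin o with heo
  have hbt : Matrix.BlockTriangular (Matrix.blockDiagonal' M)
      (fun x : Σ i, m i => eo x.1) := by
    intro x y hxy
    rcases x with ⟨q, i⟩; rcases y with ⟨q', j⟩
    have hne : q ≠ q' := fun h => by subst h; exact lt_irrefl _ hxy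
    exact Matrix.blockDiagonal'_apply_ne M i j hne
  rw [hbt.det_fintype,
    ← Equiv.prod_comp eo fun a =>
      ((Matrix.blockDiagonal' M).toSquareBlock (fun x : Σ i, m i => eo x.1) a).det]
  refine Finset.prod_congr rfl fun q _ => ?_
  let ε : m q ≃ { x : Σ i, m i // eo x.1 = eo q } :=
    { toFun := fun i => ⟨⟨q, i⟩, rfl⟩
      invFun := fun x => (congrArg m (eo.injective x.2 : x.1.1 = q)).mp x.1.2
      left_inv := fun i => rfl
      right_inv := by
        rintro ⟨⟨q', j⟩, hx⟩
        have hqq : q' = q := eo.injective hx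
        subst hqq
        rfl }
  rw [← Matrix.det_submatrix_equiv_self ε]
  congr 1
  ext i j
  simp only [Matrix.submatrix_apply, Matrix.toSquareBlock_def, ε, Equiv.coe_fn_mk]
  exact Matrix.blockDiagonal'_apply_eq M q i j

lemma my_blockDiagonal'_kronecker {o : Type*} [Fintype o] [DecidableEq o]
    {m : o → Type*} [∀ i, Fintype (m i)] [∀ i, DecidableEq (m i)]
    {V : Type*} [Fintype V] [DecidableEq V]
    (A : ∀ i, Matrix (m i) (m i) ℂ) (C : Matrix V V ℂ) :
    Matrix.reindex (Equiv.sigmaProdDistrib m V) (Equiv.sigmaProdDistrib m V)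
        ((Matrix.blockDiagonal' A) ⊗ₖ C)
      = Matrix.blockDiagonal' (fun q => A q ⊗ₖ C) := by
  ext ⟨q, i, u⟩ ⟨q', j, v⟩
  have hsymm : ∀ (x : Σ i, m i × V), (Equiv.sigmaProdDistrib m V).symm x
      = (⟨x.1, x.2.1⟩, x.2.2) := fun x => rfl
  rcases eq_or_ne q q' with rfl | hne
  · simp [Matrix.reindex_apply, Matrix.submatrix_apply, hsymm,
      Matrix.kroneckerMap_apply, Matrix.blockDiagonal'_apply_eq]
  · simp [Matrix.reindex_apply, Matrix.submatrix_apply, hsymm,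
      Matrix.kroneckerMap_apply, Matrix.blockDiagonal'_apply_ne _ _ _ hne, hne]

/-- Factorization of the characteristic polynomial of the Hermitian matrix of a
connected regular covering G^α:
det(λI_{np} - H(G^α))
  = det(λI_n - H) · ∏_{i=2}^{k} det(λI_{nf_i} - Σ_h ρ_i(h) ⊗ H_h - I_{f_i} ⊗ diag(H))^{f_i}. -/
theorem cover_char_poly_factorization
    (V : Type*) [Fintype V] [DecidableEq V]
    (Γ : Type*) [Group Γ] [Fintype Γ] [DecidableEq Γ]
    (p : ℕ) (hp : Fintype.card Γ = p)
    (adj : V → V → Prop) [DecidableRel adj]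
    (hsym : ∀ u v, adj u v → adj v u) (hirr : ∀ u, ¬ adj u u)
    (hconn : ∀ u v : V, Relation.ReflTransGen adj u v)
    (αv : V → V → Γ) (hα : ∀ u v, αv v u = (αv u v)⁻¹)
    (hconncov : ∀ a b : Γ × V, Relation.ReflTransGen
      (fun x y => adj x.2 y.2 ∧ y.1 = x.1 * αv x.2 y.2) a b)
    (H : Matrix V V ℂ)
    (hsupp : ∀ u v, u ≠ v → ¬ adj u v → H u v = 0)
    (Hcov : Matrix (Γ × V) (Γ × V) ℂ)
    (hHcov : ∀ g u k v, Hcov (g, u) (k, v) =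
      if adj u v ∧ k = g * αv u v then H u v
      else if u = v ∧ g = k then H u u else 0)
    (Hh : Γ → Matrix V V ℂ)
    (hHh : ∀ hh u v, Hh hh u v = if adj u v ∧ αv u v = hh then H u v else 0)
    -- the complete family of inequivalent irreducible unitary representations of Γ,
    -- through which the regular representation decomposes:
    (k : ℕ) (hk : 0 < k) (f : Fin k → ℕ)
    (ρ : ∀ i : Fin k, Γ → Matrix (Fin (f i)) (Fin (f i)) ℂ)
    (hρ1 : ∀ i, ρ i 1 = 1)
    (hρmul : ∀ i g g', ρ i (g * g') = ρ i g * ρ i g')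
    (hunitary : ∀ i g, (ρ i g)ᴴ * ρ i g = 1)
    (hf0 : f ⟨0, hk⟩ = 1) (hρ0 : ∀ g, ρ ⟨0, hk⟩ g = 1)
    (hsumsq : ∑ i : Fin k, f i ^ 2 = p)
    (reg : Γ → Matrix Γ Γ ℂ)
    (hreg : ∀ g a b, reg g a b = if a * g = b then 1 else 0)
    (e : (Σ q : (Σ i : Fin k, Fin (f i)), Fin (f q.1)) ≃ Γ)
    (P : Matrix Γ Γ ℂ) (hP : IsUnit P.det)
    (hdecomp : ∀ g, reg g =
      P * (Matrix.reindex e e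
        (Matrix.blockDiagonal' (fun q : Σ i : Fin k, Fin (f i) => ρ q.1 g))) * P⁻¹)
    (lam : ℂ) :
    (lam • (1 : Matrix (Γ × V) (Γ × V) ℂ) - Hcov).det =
      (lam • (1 : Matrix V V ℂ) - H).det *
        ∏ i ∈ Finset.univ.erase ⟨0, hk⟩,
          (lam • (1 : Matrix (Fin (f i) × V) (Fin (f i) × V) ℂ) -
            (∑ hh : Γ, ρ i hh ⊗ₖ Hh hh) -
            (1 : Matrix (Fin (f i)) (Fin (f i)) ℂ) ⊗ₖ
              Matrix.diagonal (fun u => H u u)).det ^ (f i) := by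
  classical
  set D : Matrix V V ℂ := Matrix.diagonal (fun u => H u u) with hD
  -- Step A: structure of Hcov
  have hA : Hcov = (∑ h : Γ, reg h ⊗ₖ Hh h) + (1 : Matrix Γ Γ ℂ) ⊗ₖ D := by
    ext ⟨g, u⟩ ⟨k', v⟩
    have hsum : (∑ h : Γ, (if g * h = k' then (1:ℂ) else 0) *
        (if adj u v ∧ αv u v = h then H u v else 0))
        = if adj u v ∧ k' = g * αv u v then H u v else 0 := by
      rw [Finset.sum_eq_single (αv u v)]
      · by_cases hadj : adj u v <;> by_cases hkk : k' = g * αv u v <;>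
          simp [hadj, hkk, eq_comm]
      · intro b _ hb
        simp [Ne.symm hb]
      · simp
    simp only [Matrix.add_apply, Matrix.sum_apply, Matrix.kroneckerMap_apply,
      hreg, hHh, hHcov, Matrix.one_apply, hD, Matrix.diagonal_apply, hsum]
    by_cases hadj : adj u v <;> by_cases hkk : k' = g * αv u v
    · have huv : u ≠ v := fun h => hirr u (h ▸ hadj)
      simp [hadj, hkk, huv]
    · simp only [hadj, hkk, and_false, false_and, if_false, true_and, if_true, and_true, zero_add]
      by_cases h1 : u = v <;> by_cases h2 : g = k' <;> simp [h1, h2, and_comm]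
    · simp only [hadj, false_and, if_false, zero_add]
      by_cases h1 : u = v <;> by_cases h2 : g = k' <;> simp [h1, h2, and_comm]
    · simp only [hadj, false_and, if_false, zero_add]
      by_cases h1 : u = v <;> by_cases h2 : g = k' <;> simp [h1, h2, and_comm]
  have hPP : P * P⁻¹ = 1 := Matrix.mul_nonsing_inv P hP
  set Bm : Γ → Matrix Γ Γ ℂ := fun h =>
    Matrix.reindex e e
      (Matrix.blockDiagonal' (fun q : Σ i : Fin k, Fin (f i) => ρ q.1 h)) with hBm
  have hdecomp' : ∀ g, reg g = P * Bm g * P⁻¹ := hdecomp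
  -- Step B: conjugation
  have h1 : (P ⊗ₖ (1 : Matrix V V ℂ)) * ((P⁻¹) ⊗ₖ (1 : Matrix V V ℂ)) = 1 := by
    rw [← Matrix.mul_kronecker_mul, hPP, one_mul, Matrix.one_kronecker_one]
  have hterm1 : (P ⊗ₖ (1 : Matrix V V ℂ)) * (lam • (1 : Matrix (Γ × V) (Γ × V) ℂ)) *
      ((P⁻¹) ⊗ₖ (1 : Matrix V V ℂ)) = lam • 1 := by
    rw [Matrix.mul_smul, Matrix.smul_mul, mul_one, h1]
  have hterm2 : (P ⊗ₖ (1 : Matrix V V ℂ)) * (∑ h : Γ, Bm h ⊗ₖ Hh h) *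
      ((P⁻¹) ⊗ₖ (1 : Matrix V V ℂ)) = ∑ h : Γ, reg h ⊗ₖ Hh h := by
    rw [Finset.mul_sum, Finset.sum_mul]
    refine Finset.sum_congr rfl fun h _ => ?_
    rw [← Matrix.mul_kronecker_mul, ← Matrix.mul_kronecker_mul, one_mul, mul_one,
      hdecomp' h]
  have hterm3 : (P ⊗ₖ (1 : Matrix V V ℂ)) * ((1 : Matrix Γ Γ ℂ) ⊗ₖ D) *
      ((P⁻¹) ⊗ₖ (1 : Matrix V V ℂ)) = (1 : Matrix Γ Γ ℂ) ⊗ₖ D := by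
    rw [← Matrix.mul_kronecker_mul, ← Matrix.mul_kronecker_mul, mul_one, one_mul,
      mul_one, hPP]
  have hconj : lam • (1 : Matrix (Γ × V) (Γ × V) ℂ) - Hcov
      = (P ⊗ₖ (1 : Matrix V V ℂ)) *
        (lam • (1 : Matrix (Γ × V) (Γ × V) ℂ)
          - (∑ h : Γ, Bm h ⊗ₖ Hh h) - (1 : Matrix Γ Γ ℂ) ⊗ₖ D) *
        ((P⁻¹) ⊗ₖ (1 : Matrix V V ℂ)) := by
    rw [hA, sub_add_eq_sub_sub, Matrix.mul_sub, Matrix.mul_sub, Matrix.sub_mul,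
      Matrix.sub_mul, hterm1, hterm2, hterm3]
  have hdet1 : (lam • (1 : Matrix (Γ × V) (Γ × V) ℂ) - Hcov).det
      = (lam • (1 : Matrix (Γ × V) (Γ × V) ℂ)
          - (∑ h : Γ, Bm h ⊗ₖ Hh h) - (1 : Matrix Γ Γ ℂ) ⊗ₖ D).det := by
    have h2 : (P ⊗ₖ (1 : Matrix V V ℂ)).det * ((P⁻¹) ⊗ₖ (1 : Matrix V V ℂ)).det = 1 := by
      rw [← Matrix.det_mul, h1, Matrix.det_one]
    rw [hconj, Matrix.det_mul, Matrix.det_mul]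
    linear_combination (lam • (1 : Matrix (Γ × V) (Γ × V) ℂ)
          - (∑ h : Γ, Bm h ⊗ₖ Hh h) - (1 : Matrix Γ Γ ℂ) ⊗ₖ D).det * h2
  -- Step C: pull the reindex out
  set eV : ((Σ q : Σ i : Fin k, Fin (f i), Fin (f q.1)) × V) ≃ (Γ × V) :=
    e.prodCongr (Equiv.refl V) with heV
  set N₁ : Matrix ((Σ q : Σ i : Fin k, Fin (f i), Fin (f q.1)) × V)
      ((Σ q : Σ i : Fin k, Fin (f i), Fin (f q.1)) × V) ℂ :=
    lam • 1 - (∑ h : Γ,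
        (Matrix.blockDiagonal' (fun q : Σ i : Fin k, Fin (f i) => ρ q.1 h)) ⊗ₖ Hh h)
      - (1 : Matrix (Σ q : Σ i : Fin k, Fin (f i), Fin (f q.1))
          (Σ q : Σ i : Fin k, Fin (f i), Fin (f q.1)) ℂ) ⊗ₖ D with hN₁
  have hN : lam • (1 : Matrix (Γ × V) (Γ × V) ℂ)
      - (∑ h : Γ, Bm h ⊗ₖ Hh h) - (1 : Matrix Γ Γ ℂ) ⊗ₖ D
      = Matrix.reindex eV eV N₁ := by
    ext ⟨a, u⟩ ⟨b, v⟩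
    have hab : (a = b) = (e.symm a = e.symm b) := by
      simp [Equiv.symm_apply_eq, Equiv.apply_symm_apply]
    simp only [hN₁, Matrix.reindex_apply, Matrix.submatrix_apply, Matrix.sub_apply,
      Matrix.smul_apply, Matrix.sum_apply, Matrix.kroneckerMap_apply, Matrix.one_apply,
      hBm, Prod.mk.injEq, Prod.ext_iff, heV, Equiv.prodCongr_symm, Equiv.prodCongr_apply,
      Equiv.coe_refl, Prod.map, id_eq, hab, smul_eq_mul]
    rfl
  have hdet2 : (lam • (1 : Matrix (Γ × V) (Γ × V) ℂ)
      - (∑ h : Γ, Bm h ⊗ₖ Hh h) - (1 : Matrix Γ Γ ℂ) ⊗ₖ D).det = N₁.det := by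
    rw [hN, Matrix.det_reindex_self]
  -- Step D: reindex through sigma-prod distribution, giving a block diagonal matrix
  set dist := Equiv.sigmaProdDistrib
    (fun q : Σ i : Fin k, Fin (f i) => Fin (f q.1)) V with hdist
  have hsub_sum : ∀ (s : Finset Γ)
      (A : Γ → Matrix ((Σ q : Σ i : Fin k, Fin (f i), Fin (f q.1)) × V)
        ((Σ q : Σ i : Fin k, Fin (f i), Fin (f q.1)) × V) ℂ),
      Matrix.reindex dist dist (∑ h ∈ s, A h) = ∑ h ∈ s, Matrix.reindex dist dist (A h) := by
    intro s A
    ext x y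
    simp [Matrix.reindex_apply, Matrix.submatrix_apply, Matrix.sum_apply]
  have hone : Matrix.reindex dist dist
      (1 : Matrix ((Σ q : Σ i : Fin k, Fin (f i), Fin (f q.1)) × V)
        ((Σ q : Σ i : Fin k, Fin (f i), Fin (f q.1)) × V) ℂ) = 1 := by
    rw [Matrix.reindex_apply, Matrix.submatrix_one_equiv]
  have hblock : Matrix.reindex dist dist N₁
      = Matrix.blockDiagonal' (fun q : Σ i : Fin k, Fin (f i) =>
          lam • (1 : Matrix (Fin (f q.1) × V) (Fin (f q.1) × V) ℂ)
            - (∑ h : Γ, ρ q.1 h ⊗ₖ Hh h)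
            - (1 : Matrix (Fin (f q.1)) (Fin (f q.1)) ℂ) ⊗ₖ D) := by
    have hsub : ∀ (X Y Z : Matrix ((Σ q : Σ i : Fin k, Fin (f i), Fin (f q.1)) × V)
        ((Σ q : Σ i : Fin k, Fin (f i), Fin (f q.1)) × V) ℂ),
        Matrix.reindex dist dist (X - Y - Z)
          = Matrix.reindex dist dist X - Matrix.reindex dist dist Y
            - Matrix.reindex dist dist Z := by
      intro X Y Z; ext x y
      simp [Matrix.reindex_apply, Matrix.submatrix_apply, Matrix.sub_apply]
    have hsmul : Matrix.reindex dist dist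
        (lam • (1 : Matrix ((Σ q : Σ i : Fin k, Fin (f i), Fin (f q.1)) × V)
          ((Σ q : Σ i : Fin k, Fin (f i), Fin (f q.1)) × V) ℂ)) = lam • 1 := by
      ext x y
      have hxy : (dist.symm x = dist.symm y) = (x = y) :=
        propext ⟨fun h => dist.symm.injective h, fun h => h ▸ rfl⟩
      simp [Matrix.reindex_apply, Matrix.submatrix_apply, Matrix.smul_apply,
        Matrix.one_apply, hxy]
    rw [hN₁, hsub, hsmul, hsub_sum]
    have hker : ∀ h : Γ, Matrix.reindex dist dist
        ((Matrix.blockDiagonal' (fun q : Σ i : Fin k, Fin (f i) => ρ q.1 h)) ⊗ₖ Hh h)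
        = Matrix.blockDiagonal' (fun q : Σ i : Fin k, Fin (f i) => ρ q.1 h ⊗ₖ Hh h) :=
      fun h => my_blockDiagonal'_kronecker _ _
    have hker2 : Matrix.reindex dist dist
        ((1 : Matrix (Σ q : Σ i : Fin k, Fin (f i), Fin (f q.1))
          (Σ q : Σ i : Fin k, Fin (f i), Fin (f q.1)) ℂ) ⊗ₖ D)
        = Matrix.blockDiagonal' (fun q : Σ i : Fin k, Fin (f i) =>
            (1 : Matrix (Fin (f q.1)) (Fin (f q.1)) ℂ) ⊗ₖ D) := by
      rw [← Matrix.blockDiagonal'_one]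
      exact my_blockDiagonal'_kronecker _ _
    simp only [hker, hker2]
    rw [← Matrix.blockDiagonal'_one (α := ℂ)
      (m' := fun q : Σ i : Fin k, Fin (f i) => Fin (f q.1) × V)]
    ext x y
    rcases x with ⟨q, x⟩; rcases y with ⟨q', y⟩
    rcases eq_or_ne q q' with rfl | hne
    · simp only [Matrix.blockDiagonal'_apply_eq, Matrix.sub_apply, Matrix.smul_apply,
        Matrix.sum_apply, smul_eq_mul]
      rfl
    · simp only [Matrix.blockDiagonal'_apply_ne _ _ _ hne, Matrix.sub_apply,
        Matrix.smul_apply, Matrix.sum_apply, smul_eq_mul]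
      simp
  have hdet3 : N₁.det = ∏ q : Σ i : Fin k, Fin (f i),
      (lam • (1 : Matrix (Fin (f q.1) × V) (Fin (f q.1) × V) ℂ)
        - (∑ h : Γ, ρ q.1 h ⊗ₖ Hh h)
        - (1 : Matrix (Fin (f q.1)) (Fin (f q.1)) ℂ) ⊗ₖ D).det := by
    rw [← Matrix.det_reindex_self dist N₁, hblock, my_det_blockDiagonal']
  -- Step E: product over the sigma type
  set G : Fin k → ℂ := fun i =>
    (lam • (1 : Matrix (Fin (f i) × V) (Fin (f i) × V) ℂ)
      - (∑ h : Γ, ρ i h ⊗ₖ Hh h)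
      - (1 : Matrix (Fin (f i)) (Fin (f i)) ℂ) ⊗ₖ D).det with hG
  have hdet4 : N₁.det = ∏ i : Fin k, G i ^ f i := by
    rw [hdet3, ← Finset.univ_sigma_univ, Finset.prod_sigma]
    exact Finset.prod_congr rfl fun i _ =>
      (Finset.prod_const (G i)).trans (by rw [Finset.card_univ, Fintype.card_fin])
  -- Step F: the trivial-representation factor
  have hHfull : ∀ u v, (∑ h : Γ, Hh h u v) + (if u = v then H u u else 0) = H u v := by
    intro u v
    by_cases hadj : adj u v
    · have huv : u ≠ v := fun h => hirr u (h ▸ hadj)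
      simp only [hHh, hadj, true_and, Finset.sum_ite_eq, Finset.mem_univ, if_true, huv,
        if_false, add_zero]
    · simp only [hHh, hadj, false_and, if_false, Finset.sum_const_zero, zero_add]
      by_cases h1 : u = v
      · subst h1; simp
      · simp [h1, hsupp u v h1 hadj]
  have hG0 : G ⟨0, hk⟩ = (lam • (1 : Matrix V V ℂ) - H).det := by
    have hmat : lam • (1 : Matrix (Fin (f ⟨0, hk⟩) × V) (Fin (f ⟨0, hk⟩) × V) ℂ)
        - (∑ h : Γ, ρ ⟨0, hk⟩ h ⊗ₖ Hh h)
        - (1 : Matrix (Fin (f ⟨0, hk⟩)) (Fin (f ⟨0, hk⟩)) ℂ) ⊗ₖ D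
        = (1 : Matrix (Fin (f ⟨0, hk⟩)) (Fin (f ⟨0, hk⟩)) ℂ) ⊗ₖ
            (lam • (1 : Matrix V V ℂ) - H) := by
      simp only [hρ0]
      ext ⟨i, u⟩ ⟨j, v⟩
      simp only [Matrix.sub_apply, Matrix.smul_apply, Matrix.sum_apply,
        Matrix.kroneckerMap_apply, Matrix.one_apply, Prod.mk.injEq, Prod.ext_iff,
        smul_eq_mul, hD, Matrix.diagonal_apply]
      rw [← hHfull u v]
      rcases eq_or_ne i j with rfl | hij
      · simp only [if_pos rfl, and_true, true_and]
        by_cases huv : u = v <;> simp [huv] <;> ring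
      · simp [hij]
    simp only [hG]
    rw [hmat, Matrix.det_kronecker, Matrix.det_one, one_pow, one_mul,
      Fintype.card_fin, hf0, pow_one]
  have hsplit : ∏ i : Fin k, G i ^ f i
      = (lam • (1 : Matrix V V ℂ) - H).det *
        ∏ i ∈ Finset.univ.erase ⟨0, hk⟩, G i ^ f i := by
    rw [← Finset.mul_prod_erase Finset.univ (fun i => G i ^ f i)
      (Finset.mem_univ (⟨0, hk⟩ : Fin k)), hf0, pow_one, hG0]
  rw [hdet1, hdet2, hdet4, hsplit]
end
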